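/- arXiv:0908.4547 — 4 statements merged into one kernel-verified Lean document; each statement's English description precedes it below -/
import Mathlib

section
/- Let G denote the Gauss measure on (0,1), i.e., the measure with density 1/((1+x)·log 2) with respect to Lebesgue measure. For any integer N ≥ 2, let S = {α ∈ (0,1) : α irrational and a_i(α) < N² for all i ≤ N}. Then ∫_S A_N(α) dG(α) ≤ 6·N·(log N + 1). -/
open MeasureTheory Filter
open scoped ENNReal

/-- The ±1 observable: +1 if `y mod 1 ∈ [0, 1/2]`, −1 otherwise. -/
noncomputable def birkhoffF (y : ℝ) : ℤ := if Int.fract y ≤ 1 / 2 then 1 else -1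

/-- Birkhoff sums `S_n(α,x) = ∑_{i=0}^{n-1} f(x + iα)`. -/
noncomputable def birkhoffS (α x : ℝ) (n : ℕ) : ℤ :=
  ∑ i ∈ Finset.range n, birkhoffF (x + i * α)

/-- Balanced times `V_{α,x}`. -/
noncomputable def balancedTimes (α x : ℝ) : Set ℕ :=
  {n : ℕ | 1 ≤ n ∧ birkhoffS α x n = 0}

/-- The Gauss map. -/
noncomputable def gaussMap (x : ℝ) : ℝ := Int.fract x⁻¹

/-- The `i`-th partial quotient of `α` (for `i ≥ 1`). -/
noncomputable def cfA (α : ℝ) (i : ℕ) : ℕ := ⌊(gaussMap^[i - 1] α)⁻¹⌋₊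

/-- `A_n(α) = a_1(α) + ⋯ + a_n(α)`. -/
noncomputable def cfSumA (α : ℝ) (n : ℕ) : ℕ := ∑ i ∈ Finset.Icc 1 n, cfA α i

/-- Denominators of convergents from a sequence of partial quotients. -/
def denomRec (c : ℕ → ℕ) : ℕ → ℕ
  | 0 => 1
  | 1 => c 1
  | n + 2 => c (n + 2) * denomRec c (n + 1) + denomRec c n

/-- `q_n(α)`. -/
noncomputable def cfQ (α : ℝ) : ℕ → ℕ := denomRec (cfA α)

/-- Upper density of a set of naturals. -/
noncomputable def upperDensity (S : Set ℕ) : ℝ :=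
  Filter.limsup
    (fun N => (∑ n ∈ Finset.Icc 1 N, Set.indicator S (fun _ => (1 : ℝ)) n) / N)
    Filter.atTop

/-- The Gauss measure on (0,1). -/
noncomputable def gaussMeasure : Measure ℝ :=
  (volume.restrict (Set.Ioo 0 1)).withDensity
    (fun x => ENNReal.ofReal (1 / ((1 + x) * Real.log 2)))

/-- Interleaved partial quotients `[2a_1, b_1, 2a_2, b_2, …]`. -/
def interleave (a b : ℕ → ℕ) (j : ℕ) : ℕ :=
  if j % 2 = 1 then 2 * a ((j + 1) / 2) else b (j / 2)

lemma measurable_gaussMap : Measurable gaussMap :=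
  measurable_fract.comp measurable_inv

lemma measurable_cfA (i : ℕ) : Measurable fun α => cfA α i :=
  Nat.measurable_floor.comp (measurable_gaussMap.iterate (i - 1)).inv

lemma gaussMeasure_apply {A : Set ℝ} (hA : MeasurableSet A) :
    gaussMeasure A = ∫⁻ x in A ∩ Set.Ioo 0 1, ENNReal.ofReal (1 / ((1 + x) * Real.log 2)) := by
  rw [gaussMeasure, withDensity_apply _ hA, Measure.restrict_restrict hA]

lemma lintegral_image_cov {s : Set ℝ} {f f' : ℝ → ℝ}
    (hs : MeasurableSet s) (hf' : ∀ x ∈ s, HasDerivWithinAt f (f' x) s x)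
    (hf : Set.InjOn f s) (g : ℝ → ℝ≥0∞) :
    ∫⁻ x in f '' s, g x = ∫⁻ x in s, ENNReal.ofReal |f' x| * g (f x) := by
  simpa only [ContinuousLinearMap.det_toSpanSingleton] using
    lintegral_image_eq_lintegral_abs_det_fderiv_mul volume hs
      (fun x hx => (hf' x hx).hasFDerivWithinAt) hf g

lemma branch_image (s : Set ℝ) (m : ℕ) :
    (fun y : ℝ => (y + (m + 1 : ℝ))⁻¹) '' (s ∩ Set.Ioo 0 1) =
      gaussMap ⁻¹' s ∩ Set.Ioo ((m + 2 : ℝ))⁻¹ ((m + 1 : ℝ))⁻¹ := by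
  ext x
  constructor
  · rintro ⟨y, ⟨hys, hy0, hy1⟩, rfl⟩
    have hpos : (0:ℝ) < y + (m + 1) := by positivity
    have hfr : Int.fract ((y + (m + 1 : ℝ))⁻¹)⁻¹ = y := by
      rw [inv_inv]
      have h1 : y + (m + 1 : ℝ) = y + ((m + 1 : ℤ) : ℝ) := by push_cast; ring
      rw [h1, Int.fract_add_intCast, Int.fract_eq_self.mpr ⟨hy0.le, hy1⟩]
    refine ⟨?_, ?_, ?_⟩
    · show gaussMap _ ∈ s
      rw [gaussMap, hfr]; exact hys
    · rw [inv_lt_inv₀ (by positivity) hpos]; linarith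
    · rw [inv_lt_inv₀ hpos (by positivity)]; linarith
  · rintro ⟨hxs, hx1, hx2⟩
    have hx0 : 0 < x := lt_trans (by positivity) hx1
    have h1 : (m + 1 : ℝ) < x⁻¹ := by
      have := (inv_lt_inv₀ (by positivity : (0:ℝ) < ((m:ℝ)+1)⁻¹) hx0).mpr hx2
      rwa [inv_inv] at this
    have h2 : x⁻¹ < (m + 2 : ℝ) := by
      have := (inv_lt_inv₀ hx0 (by positivity : (0:ℝ) < ((m:ℝ)+2)⁻¹)).mpr hx1
      rwa [inv_inv] at this
    refine ⟨x⁻¹ - (m + 1 : ℝ), ⟨?_, by linarith, by linarith⟩, ?_⟩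
    · have hfr : Int.fract x⁻¹ = x⁻¹ - ((m:ℝ) + 1) := by
        have h3 : Int.fract x⁻¹ = Int.fract (x⁻¹ - ((m + 1 : ℤ) : ℝ)) := (Int.fract_sub_intCast _ _).symm
        rw [h3, Int.fract_eq_self.mpr ⟨by push_cast; linarith, by push_cast; linarith⟩]
        push_cast; ring
      have : gaussMap x ∈ s := hxs
      rwa [gaussMap, hfr] at this
    · show (x⁻¹ - ((m:ℝ) + 1) + ((m:ℝ) + 1))⁻¹ = x
      rw [sub_add_cancel, inv_inv]

lemma gauss_telescope (y : ℝ) (hy : 0 < y) :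
    HasSum (fun m : ℕ => 1 / ((y + m + 1) * (y + m + 2) * Real.log 2))
      (1 / ((1 + y) * Real.log 2)) := by
  have hlog : (0:ℝ) < Real.log 2 := Real.log_pos one_lt_two
  set f : ℕ → ℝ := fun m => (y + m + 1)⁻¹ with hfdef
  have hf : ∀ m : ℕ, 1 / ((y + m + 1) * (y + m + 2) * Real.log 2)
      = (Real.log 2)⁻¹ * (f m - f (m + 1)) := by
    intro m
    have h1 : (0:ℝ) < y + m + 1 := by positivity
    have h2 : (0:ℝ) < y + m + 2 := by positivity
    simp only [hfdef]
    push_cast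
    rw [div_eq_iff (by positivity)]
    field_simp
    ring
  have hnn : ∀ m : ℕ, 0 ≤ f m - f (m + 1) := by
    intro m
    have h1 : (0:ℝ) < y + m + 1 := by positivity
    have h2 : (y + m + 1 : ℝ) ≤ y + (m + 1 : ℕ) + 1 := by push_cast; linarith
    have h3 := inv_anti₀ h1 h2
    simpa only [hfdef, sub_nonneg] using h3
  have hbase : HasSum (fun m : ℕ => f m - f (m + 1)) (f 0) := by
    rw [hasSum_iff_tendsto_nat_of_nonneg hnn]
    have hsum : ∀ n : ℕ, ∑ i ∈ Finset.range n, (f i - f (i + 1)) = f 0 - f n :=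
      fun n => Finset.sum_range_sub' f n
    simp only [hsum]
    have htend : Tendsto f atTop (nhds 0) := by
      apply Filter.Tendsto.comp tendsto_inv_atTop_zero
      apply tendsto_atTop_mono (fun n : ℕ => by push_cast; linarith [Nat.cast_nonneg (α := ℝ) n] :
        ∀ n : ℕ, (n:ℝ) ≤ y + n + 1)
      exact tendsto_natCast_atTop_atTop
    simpa using (tendsto_const_nhds.sub htend)
  have hmul := hbase.mul_left (Real.log 2)⁻¹
  have heq : (Real.log 2)⁻¹ * f 0 = 1 / ((1 + y) * Real.log 2) := by
    simp only [hfdef]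
    push_cast
    field_simp
    ring
  rw [heq] at hmul
  rw [funext hf]
  exact hmul

lemma gaussMeasure_preimage_le {s : Set ℝ} (hs : MeasurableSet s) :
    gaussMeasure (gaussMap ⁻¹' s) ≤ gaussMeasure s := by
  classical
  have hlog : (0:ℝ) < Real.log 2 := Real.log_pos one_lt_two
  set g : ℝ → ℝ≥0∞ := fun x => ENNReal.ofReal (1 / ((1 + x) * Real.log 2)) with hg
  have hgmeas : Measurable g := by
    apply Measurable.ennreal_ofReal
    exact (measurable_const.div (((measurable_const.add measurable_id).mul measurable_const)))
  rw [gaussMeasure_apply (measurable_gaussMap hs), gaussMeasure_apply hs]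
  set s' := s ∩ Set.Ioo (0:ℝ) 1 with hs'def
  have hs' : MeasurableSet s' := hs.inter measurableSet_Ioo
  -- cover of the preimage by branch images and a countable set
  have cover : gaussMap ⁻¹' s ∩ Set.Ioo 0 1 ⊆
      (⋃ m : ℕ, (fun y : ℝ => (y + (m + 1 : ℝ))⁻¹) '' s') ∪
        Set.range (fun n : ℕ => (n : ℝ)⁻¹) := by
    rintro x ⟨hxs, hx0, hx1⟩
    have hxinv1 : 1 < x⁻¹ := (one_lt_inv₀ hx0).mpr hx1
    have hxinv0 : (0:ℝ) < x⁻¹ := by positivity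
    set n := ⌊x⁻¹⌋₊ with hn
    have hfl : (n:ℝ) ≤ x⁻¹ := Nat.floor_le hxinv0.le
    rcases eq_or_lt_of_le hfl with h | h
    · refine Or.inr ⟨n, ?_⟩
      show ((n:ℝ))⁻¹ = x
      rw [h, inv_inv]
    · refine Or.inl ?_
      have hn1 : 1 ≤ n := Nat.le_floor (by exact_mod_cast hxinv1.le)
      refine Set.mem_iUnion.mpr ⟨n - 1, ?_⟩
      rw [branch_image]
      have hc1 : ((n - 1 : ℕ) : ℝ) + 1 = (n : ℝ) := by
        rw [Nat.cast_sub hn1]; push_cast; ring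
      have hc2 : ((n - 1 : ℕ) : ℝ) + 2 = (n : ℝ) + 1 := by
        rw [Nat.cast_sub hn1]; push_cast; ring
      have hlt : x⁻¹ < (n:ℝ) + 1 := by
        have := Nat.lt_floor_add_one x⁻¹
        exact_mod_cast this
      refine ⟨hxs, ?_, ?_⟩
      · rw [hc2]
        have := (inv_lt_inv₀ (by positivity) hxinv0).mpr hlt
        rwa [inv_inv] at this
      · rw [hc1]
        have hnpos : (0:ℝ) < n := by exact_mod_cast hn1
        have := (inv_lt_inv₀ hxinv0 hnpos).mpr h
        rwa [inv_inv] at this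
  calc ∫⁻ x in gaussMap ⁻¹' s ∩ Set.Ioo 0 1, g x
      ≤ ∫⁻ x in (⋃ m : ℕ, (fun y : ℝ => (y + (m + 1 : ℝ))⁻¹) '' s') ∪
          Set.range (fun n : ℕ => (n : ℝ)⁻¹), g x := lintegral_mono_set cover
    _ ≤ (∫⁻ x in ⋃ m : ℕ, (fun y : ℝ => (y + (m + 1 : ℝ))⁻¹) '' s', g x) +
          ∫⁻ x in Set.range (fun n : ℕ => (n : ℝ)⁻¹), g x := lintegral_union_le _ _ _
    _ = ∫⁻ x in ⋃ m : ℕ, (fun y : ℝ => (y + (m + 1 : ℝ))⁻¹) '' s', g x := by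
        rw [setLIntegral_measure_zero _ _ ((Set.countable_range _).measure_zero _), add_zero]
    _ ≤ ∑' m : ℕ, ∫⁻ x in (fun y : ℝ => (y + (m + 1 : ℝ))⁻¹) '' s', g x :=
        lintegral_iUnion_le _ _
    _ = ∑' m : ℕ, ∫⁻ y in s', ENNReal.ofReal |(-(((y + (m + 1 : ℝ)) ^ 2)⁻¹))| *
          g ((y + (m + 1 : ℝ))⁻¹) := by
        congr 1
        funext m
        apply lintegral_image_cov hs'
        · intro y hy
          have hpos : (0:ℝ) < y + (m + 1 : ℝ) := by
            have := hy.2.1; positivity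
          have h := ((hasDerivAt_id y).add_const ((m:ℝ) + 1)).inv hpos.ne'
          simp only [id_eq] at h
          have heq : -1 / (y + ((m:ℝ) + 1)) ^ 2 = -(((y + (m + 1 : ℝ)) ^ 2)⁻¹) := by
            field_simp
          rw [heq] at h
          exact h.hasDerivWithinAt
        · exact (inv_injective.comp (add_left_injective _)).injOn
    _ = ∫⁻ y in s', ∑' m : ℕ, ENNReal.ofReal |(-(((y + (m + 1 : ℝ)) ^ 2)⁻¹))| *
          g ((y + (m + 1 : ℝ))⁻¹) := by
        rw [← lintegral_tsum]
        intro m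
        apply Measurable.aemeasurable
        exact ((((measurable_id.add_const _).pow_const 2).inv.neg.abs).ennreal_ofReal).mul
          (hgmeas.comp (measurable_id.add_const _).inv)
    _ = ∫⁻ y in s', g y := by
        apply setLIntegral_congr_fun hs'
        intro y hy
        have hy0 : (0:ℝ) < y := hy.2.1
        have hterm : ∀ m : ℕ, ENNReal.ofReal |(-(((y + (m + 1 : ℝ)) ^ 2)⁻¹))| *
            g ((y + (m + 1 : ℝ))⁻¹)
            = ENNReal.ofReal (1 / ((y + m + 1) * (y + m + 2) * Real.log 2)) := by
          intro m
          have hpos : (0:ℝ) < y + (m + 1 : ℝ) := by positivity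
          rw [abs_neg, abs_of_nonneg (by positivity : (0:ℝ) ≤ ((y + (m + 1 : ℝ)) ^ 2)⁻¹), hg,
            ← ENNReal.ofReal_mul (by positivity)]
          congr 1
          have h1 : (0:ℝ) < 1 + (y + (m + 1 : ℝ))⁻¹ := by positivity
          field_simp
          ring
        simp only [hterm]
        have hsum := gauss_telescope y hy0
        rw [← ENNReal.ofReal_tsum_of_nonneg (fun m => by positivity) hsum.summable, hsum.tsum_eq]

lemma gauss_iter_mem (α : ℝ) (h1 : α ∈ Set.Ioo (0:ℝ) 1) (h2 : Irrational α) (m : ℕ) :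
    gaussMap^[m] α ∈ Set.Ioo (0:ℝ) 1 ∧ Irrational (gaussMap^[m] α) := by
  induction m with
  | zero => exact ⟨h1, h2⟩
  | succ n ih =>
    obtain ⟨⟨hx0, hx1⟩, hirr⟩ := ih
    rw [Function.iterate_succ_apply']
    set x := gaussMap^[n] α
    have hinv : Irrational x⁻¹ := hirr.inv
    have hfr : Irrational (Int.fract x⁻¹) := by
      rw [Int.fract]
      exact hinv.sub_intCast _
    refine ⟨⟨?_, ?_⟩, hfr⟩
    · exact lt_of_le_of_ne (Int.fract_nonneg _) (Ne.symm hfr.ne_zero)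
    · exact Int.fract_lt_one _

lemma gauss_iter_preimage_le {s : Set ℝ} (hs : MeasurableSet s) (m : ℕ) :
    gaussMeasure (gaussMap^[m] ⁻¹' s) ≤ gaussMeasure s := by
  induction m with
  | zero => simp
  | succ n ih =>
    rw [Function.iterate_succ]
    calc gaussMeasure ((gaussMap^[n] ∘ gaussMap) ⁻¹' s)
        = gaussMeasure (gaussMap ⁻¹' (gaussMap^[n] ⁻¹' s)) := by rw [Set.preimage_comp]
      _ ≤ gaussMeasure (gaussMap^[n] ⁻¹' s) :=
          gaussMeasure_preimage_le ((measurable_gaussMap.iterate n) hs)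
      _ ≤ gaussMeasure s := ih

lemma gauss_Ioc_le (k : ℕ) (hk : 1 ≤ k) :
    gaussMeasure (Set.Ioc 0 ((k:ℝ))⁻¹) ≤ ENNReal.ofReal (1 / (k * Real.log 2)) := by
  have hlog : (0:ℝ) < Real.log 2 := Real.log_pos one_lt_two
  have hkpos : (0:ℝ) < k := by exact_mod_cast hk
  rw [gaussMeasure_apply measurableSet_Ioc]
  calc ∫⁻ x in Set.Ioc 0 ((k:ℝ))⁻¹ ∩ Set.Ioo 0 1, ENNReal.ofReal (1 / ((1 + x) * Real.log 2))
      ≤ ∫⁻ _ in Set.Ioc 0 ((k:ℝ))⁻¹ ∩ Set.Ioo 0 1, ENNReal.ofReal (1 / Real.log 2) := by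
        apply setLIntegral_mono' (measurableSet_Ioc.inter measurableSet_Ioo)
        intro x hx
        apply ENNReal.ofReal_le_ofReal
        rw [div_le_div_iff₀ (by have := hx.2.1; positivity) hlog]
        have := hx.2.1
        nlinarith
    _ = ENNReal.ofReal (1 / Real.log 2) * volume (Set.Ioc 0 ((k:ℝ))⁻¹ ∩ Set.Ioo 0 1) :=
        setLIntegral_const _ _
    _ ≤ ENNReal.ofReal (1 / Real.log 2) * volume (Set.Ioc 0 ((k:ℝ))⁻¹) := by
        gcongr
        exact Set.inter_subset_left
    _ = ENNReal.ofReal (1 / Real.log 2) * ENNReal.ofReal ((k:ℝ))⁻¹ := by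
        rw [Real.volume_Ioc, sub_zero]
    _ = ENNReal.ofReal (1 / (k * Real.log 2)) := by
        rw [← ENNReal.ofReal_mul (by positivity)]
        congr 1
        field_simp

lemma cfA_mem_Ioc {α : ℝ} (h1 : α ∈ Set.Ioo (0:ℝ) 1) (h2 : Irrational α) {i k : ℕ}
    (hk : 1 ≤ k) (h : k ≤ cfA α i) : gaussMap^[i - 1] α ∈ Set.Ioc 0 ((k:ℝ))⁻¹ := by
  obtain ⟨⟨hx0, hx1⟩, -⟩ := gauss_iter_mem α h1 h2 (i - 1)
  set x := gaussMap^[i - 1] α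
  have hxk : (k:ℝ) ≤ x⁻¹ := by
    calc (k:ℝ) ≤ (⌊x⁻¹⌋₊ : ℝ) := by exact_mod_cast h
      _ ≤ x⁻¹ := Nat.floor_le (by positivity)
  have hkpos : (0:ℝ) < k := by exact_mod_cast hk
  refine ⟨hx0, ?_⟩
  have := inv_anti₀ hkpos hxk
  rwa [inv_inv] at this

lemma nat_layer (m M : ℕ) (h : m ≤ M) :
    ∑ k ∈ Finset.Icc 1 M, (if k ≤ m then (1:ℝ≥0∞) else 0) = m := by
  classical
  have h1 : ∀ k ∈ Finset.Icc 1 M, (if k ≤ m then (1:ℝ≥0∞) else 0)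
      = if k ∈ Finset.Icc 1 m then (1:ℝ≥0∞) else 0 := by
    intro k hk
    rcases Finset.mem_Icc.mp hk with ⟨hk1, -⟩
    by_cases hkm : k ≤ m <;> simp [hkm, Finset.mem_Icc, hk1]
  rw [Finset.sum_congr rfl h1, Finset.sum_ite_mem]
  have h2 : Finset.Icc 1 M ∩ Finset.Icc 1 m = Finset.Icc 1 m := by
    ext k
    simp only [Finset.mem_inter, Finset.mem_Icc]
    omega
  rw [h2]
  simp [Nat.card_Icc]

lemma key_bound (N : ℕ) (hN : 2 ≤ N) (S : Set ℝ) (hSmeas : MeasurableSet S)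
    (hSsub : ∀ α ∈ S, α ∈ Set.Ioo (0:ℝ) 1 ∧ Irrational α)
    (i : ℕ) (hbound : ∀ α ∈ S, cfA α i ≤ N ^ 2 - 1) :
    ∫⁻ α in S, (cfA α i : ℝ≥0∞) ∂gaussMeasure ≤ ENNReal.ofReal (3 * (Real.log N + 1)) := by
  classical
  have hlog : (0:ℝ) < Real.log 2 := Real.log_pos one_lt_two
  have hlogN : (0:ℝ) ≤ Real.log N :=
    Real.log_nonneg (by exact_mod_cast (by omega : 1 ≤ N))
  set M := N ^ 2 - 1 with hM
  have hM1 : 1 ≤ M := by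
    rw [hM]
    exact Nat.le_sub_one_of_lt (by nlinarith)
  have hmeasset : ∀ k : ℕ, MeasurableSet {β : ℝ | k ≤ cfA β i} := by
    intro k
    exact measurable_cfA i ((Set.to_countable _).measurableSet)
  have step1 : ∫⁻ α in S, (cfA α i : ℝ≥0∞) ∂gaussMeasure
      = ∑ k ∈ Finset.Icc 1 M, ∫⁻ α in S,
          Set.indicator {β : ℝ | k ≤ cfA β i} (fun _ => (1:ℝ≥0∞)) α ∂gaussMeasure := by
    rw [← lintegral_finset_sum' _
      (fun k _ => (measurable_const.indicator (hmeasset k) :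
        Measurable (Set.indicator {β : ℝ | k ≤ cfA β i} (fun _ => (1:ℝ≥0∞)))).aemeasurable)]
    apply setLIntegral_congr_fun hSmeas
    intro α hα
    have hind : ∀ k, Set.indicator {β : ℝ | k ≤ cfA β i} (fun _ => (1:ℝ≥0∞)) α
        = if k ≤ cfA α i then 1 else 0 := by
      intro k
      by_cases h : k ≤ cfA α i <;> simp [Set.indicator, h]
    simp only [hind]
    exact (nat_layer _ _ (hbound α hα)).symm
  have step2 : ∀ k ∈ Finset.Icc 1 M, ∫⁻ α in S,
      Set.indicator {β : ℝ | k ≤ cfA β i} (fun _ => (1:ℝ≥0∞)) α ∂gaussMeasure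
      ≤ ENNReal.ofReal (1 / (k * Real.log 2)) := by
    intro k hk
    rcases Finset.mem_Icc.mp hk with ⟨hk1, -⟩
    rw [lintegral_indicator (hmeasset k), Measure.restrict_restrict (hmeasset k),
      setLIntegral_one]
    calc gaussMeasure ({β : ℝ | k ≤ cfA β i} ∩ S)
        ≤ gaussMeasure (gaussMap^[i - 1] ⁻¹' (Set.Ioc 0 ((k:ℝ))⁻¹)) := by
          apply measure_mono
          rintro α ⟨hk', hαS⟩
          obtain ⟨hIoo, hirr⟩ := hSsub α hαS
          exact cfA_mem_Ioc hIoo hirr hk1 hk'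
      _ ≤ gaussMeasure (Set.Ioc 0 ((k:ℝ))⁻¹) := gauss_iter_preimage_le measurableSet_Ioc _
      _ ≤ ENNReal.ofReal (1 / (k * Real.log 2)) := gauss_Ioc_le k hk1
  have real_bound : ∑ k ∈ Finset.Icc 1 M, 1 / ((k:ℝ) * Real.log 2) ≤ 3 * (Real.log N + 1) := by
    have hsum : ∑ k ∈ Finset.Icc 1 M, 1 / ((k:ℝ) * Real.log 2)
        = (∑ k ∈ Finset.Icc 1 M, ((k:ℝ))⁻¹) * (Real.log 2)⁻¹ := by
      rw [Finset.sum_mul]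
      congr 1
      funext k
      rw [one_div, mul_inv]
    have hharm : ∑ k ∈ Finset.Icc 1 M, ((k:ℝ))⁻¹ = ((harmonic M : ℚ) : ℝ) := by
      rw [harmonic_eq_sum_Icc]
      push_cast
      rfl
    have hle1 : ((harmonic M : ℚ) : ℝ) ≤ 1 + Real.log M := harmonic_le_one_add_log M
    have hle2 : Real.log M ≤ 2 * Real.log N := by
      have h1 : (M:ℝ) ≤ (N:ℝ) ^ 2 := by
        have : M ≤ N ^ 2 := hM ▸ Nat.sub_le _ _
        exact_mod_cast this
      have h2 : Real.log M ≤ Real.log ((N:ℝ) ^ 2) :=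
        Real.log_le_log (by exact_mod_cast hM1) h1
      rwa [Real.log_pow, Nat.cast_ofNat] at h2
    have hlog2 : (0.6931471803 : ℝ) < Real.log 2 := Real.log_two_gt_d9
    rw [hsum, hharm]
    have hharm_nonneg : (0:ℝ) ≤ ((harmonic M : ℚ) : ℝ) := by
      have : (0:ℚ) ≤ harmonic M := (harmonic_pos (by omega)).le
      exact_mod_cast this
    have hkey : ((harmonic M : ℚ) : ℝ) ≤ 1 + 2 * Real.log N := by linarith
    have hinv0 : (0:ℝ) < (Real.log 2)⁻¹ := by positivity
    have hinv : (Real.log 2)⁻¹ ≤ 3 / 2 :=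
      inv_le_of_inv_le₀ (by norm_num) (by norm_num; linarith)
    nlinarith [mul_le_mul hkey hinv hinv0.le (by linarith : (0:ℝ) ≤ 1 + 2 * Real.log N)]
  calc ∫⁻ α in S, (cfA α i : ℝ≥0∞) ∂gaussMeasure
      = ∑ k ∈ Finset.Icc 1 M, ∫⁻ α in S,
          Set.indicator {β : ℝ | k ≤ cfA β i} (fun _ => (1:ℝ≥0∞)) α ∂gaussMeasure := step1
    _ ≤ ∑ k ∈ Finset.Icc 1 M, ENNReal.ofReal (1 / (k * Real.log 2)) :=
        Finset.sum_le_sum step2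
    _ = ENNReal.ofReal (∑ k ∈ Finset.Icc 1 M, 1 / ((k:ℝ) * Real.log 2)) :=
        (ENNReal.ofReal_sum_of_nonneg (fun k _ => by positivity)).symm
    _ ≤ ENNReal.ofReal (3 * (Real.log N + 1)) := ENNReal.ofReal_le_ofReal real_bound

/-- For N ≥ 2 and S = {α irrational : a_i(α) < N² for all 1 ≤ i ≤ N},
    ∫_S A_N(α) dG(α) ≤ 6·N·(log N + 1), where G is the Gauss measure. -/
theorem stmt6 (N : ℕ) (hN : 2 ≤ N) :
    ∫ α in {α : ℝ | α ∈ Set.Ioo (0 : ℝ) 1 ∧ Irrational α ∧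
        ∀ i, 1 ≤ i → i ≤ N → cfA α i < N ^ 2},
      (cfSumA α N : ℝ) ∂gaussMeasure ≤ 6 * N * (Real.log N + 1) := by
  classical
  have hlogN : (0:ℝ) ≤ Real.log N :=
    Real.log_nonneg (by exact_mod_cast (by omega : 1 ≤ N))
  have hNpos : (0:ℝ) ≤ (N:ℝ) := Nat.cast_nonneg N
  set S := {α : ℝ | α ∈ Set.Ioo (0 : ℝ) 1 ∧ Irrational α ∧
      ∀ i, 1 ≤ i → i ≤ N → cfA α i < N ^ 2} with hSdef
  have hirrmeas : MeasurableSet {α : ℝ | Irrational α} := by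
    have h : {α : ℝ | Irrational α} = (Set.range ((↑) : ℚ → ℝ))ᶜ := rfl
    rw [h]
    exact (Set.countable_range _).measurableSet.compl
  have hSmeas : MeasurableSet S := by
    have h : S = Set.Ioo (0:ℝ) 1 ∩ ({α : ℝ | Irrational α} ∩
        ⋂ i : ℕ, ⋂ (_ : 1 ≤ i), ⋂ (_ : i ≤ N), (fun α => cfA α i) ⁻¹' {n : ℕ | n < N ^ 2}) := by
      ext α
      simp only [hSdef, Set.mem_setOf_eq, Set.mem_inter_iff, Set.mem_iInter, Set.mem_preimage]
    rw [h]
    exact measurableSet_Ioo.inter (hirrmeas.inter (MeasurableSet.iInter fun i =>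
      MeasurableSet.iInter fun _ => MeasurableSet.iInter fun _ =>
        measurable_cfA i ((Set.to_countable _).measurableSet)))
  have hfmeas : Measurable fun α : ℝ => (cfSumA α N : ℝ) := by
    have h : (fun α : ℝ => (cfSumA α N : ℝ)) = fun α => ∑ i ∈ Finset.Icc 1 N, (cfA α i : ℝ) := by
      funext α
      rw [cfSumA]
      push_cast
      rfl
    rw [h]
    exact Finset.measurable_sum _ (fun i _ => measurable_from_top.comp (measurable_cfA i))
  rw [integral_eq_lintegral_of_nonneg_ae
    (Filter.Eventually.of_forall (fun α => by positivity)) hfmeas.aestronglyMeasurable]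
  apply ENNReal.toReal_le_of_le_ofReal (by positivity)
  have hkey : ∀ i ∈ Finset.Icc 1 N,
      ∫⁻ α in S, (cfA α i : ℝ≥0∞) ∂gaussMeasure ≤ ENNReal.ofReal (3 * (Real.log N + 1)) := by
    intro i hi
    rcases Finset.mem_Icc.mp hi with ⟨hi1, hi2⟩
    apply key_bound N hN S hSmeas (fun α hα => ⟨hα.1, hα.2.1⟩) i
    intro α hα
    have := hα.2.2 i hi1 hi2
    omega
  calc ∫⁻ α in S, ENNReal.ofReal ((cfSumA α N : ℝ)) ∂gaussMeasure
      = ∫⁻ α in S, ∑ i ∈ Finset.Icc 1 N, (cfA α i : ℝ≥0∞) ∂gaussMeasure := by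
        apply lintegral_congr
        intro α
        rw [ENNReal.ofReal_natCast, cfSumA]
        push_cast
        rfl
    _ = ∑ i ∈ Finset.Icc 1 N, ∫⁻ α in S, (cfA α i : ℝ≥0∞) ∂gaussMeasure := by
        apply lintegral_finset_sum'
        exact fun i _ => (measurable_from_top.comp (measurable_cfA i)).aemeasurable
    _ ≤ ∑ i ∈ Finset.Icc 1 N, ENNReal.ofReal (3 * (Real.log N + 1)) := Finset.sum_le_sum hkey
    _ = (N : ℝ≥0∞) * ENNReal.ofReal (3 * (Real.log N + 1)) := by
        rw [Finset.sum_const, Nat.card_Icc]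
        simp [nsmul_eq_mul]
    _ ≤ ENNReal.ofReal (6 * N * (Real.log N + 1)) := by
        rw [← ENNReal.ofReal_natCast, ← ENNReal.ofReal_mul hNpos]
        apply ENNReal.ofReal_le_ofReal
        nlinarith
end

section
/- For every irrational α ∈ (0,1), every x ∈ [0,1), and every n ≥ 1: max over 1 ≤ i ≤ q_n of |S_i(α,x)| ≤ 3·A_n(α). That is, the maximal absolute value of the Birkhoff sums of f up to time q_n is bounded by three times the sum of the first n partial quotients of α. -/
open MeasureTheory Filter
open scoped ENNReal

namespace S7

noncomputable def al (α : ℝ) (k : ℕ) : ℝ := gaussMap^[k] α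

lemma al_zero (α : ℝ) : al α 0 = α := rfl

lemma al_succ (α : ℝ) (k : ℕ) : al α (k+1) = gaussMap (al α k) := by
  simp [al, Function.iterate_succ_apply']

lemma irrational_fract {x : ℝ} (h : Irrational x) : Irrational (Int.fract x) := by
  rw [Int.fract]
  exact Irrational.sub_intCast h _

lemma al_mem (α : ℝ) (hα : α ∈ Set.Ioo (0:ℝ) 1) (hirr : Irrational α) (k : ℕ) :
    al α k ∈ Set.Ioo (0:ℝ) 1 ∧ Irrational (al α k) := by
  induction k with
  | zero => exact ⟨hα, hirr⟩
  | succ k ih =>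
    obtain ⟨⟨h0, h1⟩, hi⟩ := ih
    rw [al_succ]
    have hinv : Irrational (al α k)⁻¹ := hi.inv
    have hfr : Irrational (Int.fract (al α k)⁻¹) := irrational_fract hinv
    refine ⟨⟨?_, Int.fract_lt_one _⟩, hfr⟩
    rcases eq_or_lt_of_le (Int.fract_nonneg (al α k)⁻¹) with h | h
    · exact absurd (h.symm ▸ hfr) (by intro hh; exact hh ⟨0, by norm_num⟩)
    · exact h

lemma al_pos (α : ℝ) (hα : α ∈ Set.Ioo (0:ℝ) 1) (hirr : Irrational α) (k : ℕ) :
    0 < al α k := (al_mem α hα hirr k).1.1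

lemma al_lt_one (α : ℝ) (hα : α ∈ Set.Ioo (0:ℝ) 1) (hirr : Irrational α) (k : ℕ) :
    al α k < 1 := (al_mem α hα hirr k).1.2

lemma cfA_eq (α : ℝ) (k : ℕ) : cfA α (k+1) = ⌊(al α k)⁻¹⌋₊ := by
  simp [cfA, al]

/-- key relation: 1/α_k = a_{k+1} + α_{k+1} -/
lemma inv_al (α : ℝ) (hα : α ∈ Set.Ioo (0:ℝ) 1) (hirr : Irrational α) (k : ℕ) :
    (al α k)⁻¹ = (cfA α (k+1) : ℝ) + al α (k+1) := by
  have hpos : 0 < al α k := al_pos α hα hirr k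
  have hinvpos : 0 ≤ (al α k)⁻¹ := le_of_lt (inv_pos.mpr hpos)
  rw [cfA_eq, al_succ]
  show (al α k)⁻¹ = (⌊(al α k)⁻¹⌋₊ : ℝ) + Int.fract (al α k)⁻¹
  rw [Int.fract]
  have : (⌊(al α k)⁻¹⌋₊ : ℝ) = (⌊(al α k)⁻¹⌋ : ℝ) := by
    rw [← Int.floor_toNat]
    exact_mod_cast congrArg Int.cast (Int.toNat_of_nonneg (Int.floor_nonneg.mpr hinvpos))
  rw [this]; ring

lemma one_lt_inv_al (α : ℝ) (hα : α ∈ Set.Ioo (0:ℝ) 1) (hirr : Irrational α) (k : ℕ) :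
    1 < (al α k)⁻¹ :=
  by
  have h1 := al_pos α hα hirr k
  have h2 := al_lt_one α hα hirr k
  rw [lt_inv_comm₀ (by norm_num) h1]
  simpa using h2

lemma cfA_pos (α : ℝ) (hα : α ∈ Set.Ioo (0:ℝ) 1) (hirr : Irrational α) (k : ℕ) :
    1 ≤ cfA α (k+1) := by
  rw [cfA_eq]
  exact Nat.le_floor (by exact_mod_cast le_of_lt (one_lt_inv_al α hα hirr k))


noncomputable def pn (α : ℝ) : ℕ → ℕ
  | 0 => 0
  | 1 => 1
  | n+2 => cfA α (n+2) * pn α (n+1) + pn α n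

noncomputable def eta (α : ℝ) (n : ℕ) : ℝ := ∏ j ∈ Finset.range (n+1), al α j

lemma eta_zero (α : ℝ) : eta α 0 = α := by simp [eta, al_zero]

lemma eta_succ (α : ℝ) (n : ℕ) : eta α (n+1) = eta α n * al α (n+1) := by
  simp [eta, Finset.prod_range_succ]

variable {α : ℝ} (hα : α ∈ Set.Ioo (0:ℝ) 1) (hirr : Irrational α)

include hα hirr

lemma eta_pos (n : ℕ) : 0 < eta α n :=
  Finset.prod_pos fun j _ => al_pos α hα hirr j

lemma eta_lt_one (n : ℕ) : eta α n < 1 := by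
  induction n with
  | zero => rw [eta_zero]; exact hα.2
  | succ n ih =>
    rw [eta_succ]
    calc eta α n * al α (n+1) < 1 * 1 := by
          apply mul_lt_mul' (le_of_lt ih) (al_lt_one α hα hirr _)
            (le_of_lt (al_pos α hα hirr _)) (by norm_num)
      _ = 1 := by norm_num

/-- α_k(a_{k+1} + α_{k+1}) = 1 -/
lemma al_mul (k : ℕ) : al α k * ((cfA α (k+1) : ℝ) + al α (k+1)) = 1 := by
  rw [← inv_al α hα hirr k]
  exact mul_inv_cancel₀ (ne_of_gt (al_pos α hα hirr k))

lemma eta_rec (n : ℕ) : eta α (n+2) = eta α n - (cfA α (n+2) : ℝ) * eta α (n+1) := by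
  have h := al_mul hα hirr (n+1)
  rw [eta_succ, eta_succ]
  have : al α (n+1) * al α (n+2) = 1 - (cfA α (n+2) : ℝ) * al α (n+1) := by nlinarith [h]
  rw [mul_assoc, this]; ring

omit hα hirr in
lemma cfQ_zero : cfQ α 0 = 1 := rfl
omit hα hirr in
lemma cfQ_one : cfQ α 1 = cfA α 1 := rfl
omit hα hirr in
lemma cfQ_rec (n : ℕ) : cfQ α (n+2) = cfA α (n+2) * cfQ α (n+1) + cfQ α n := rfl

omit hα hirr in
lemma pn_rec (n : ℕ) : pn α (n+2) = cfA α (n+2) * pn α (n+1) + pn α n := rfl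

lemma cfQ_pos (n : ℕ) : 1 ≤ cfQ α n := by
  induction n using Nat.strong_induction_on with
  | _ n ih =>
    match n with
    | 0 => exact le_refl 1
    | 1 => rw [cfQ_one]; have := cfA_pos α hα hirr 0; simpa using this
    | n+2 =>
      rw [cfQ_rec]
      have := ih n (by omega)
      omega

lemma cfQ_mono (n : ℕ) : cfQ α n ≤ cfQ α (n+1) := by
  match n with
  | 0 => rw [cfQ_zero, cfQ_one]; have := cfA_pos α hα hirr 0; simpa using this
  | n+1 =>
    rw [cfQ_rec]
    have h1 := cfA_pos α hα hirr (n+1)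
    have h2 := cfQ_pos hα hirr n
    nlinarith [Nat.one_le_iff_ne_zero.mp (cfQ_pos hα hirr (n+1))]

/-- q_n α - p_n = (-1)^n η_n -/
lemma key_id (n : ℕ) : (cfQ α n : ℝ) * α - pn α n = (-1)^n * eta α n := by
  induction n using Nat.strong_induction_on with
  | _ n ih =>
    match n with
    | 0 => simp [cfQ_zero, pn, eta_zero]
    | 1 =>
      have h := al_mul hα hirr 0
      rw [al_zero] at h
      simp only [cfQ_one, pn, eta_succ, eta_zero]
      have : (cfA α 1 : ℝ) = (cfA α (0+1) : ℝ) := by norm_num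
      push_cast
      nlinarith [h]
    | n+2 =>
      have h1 := ih (n+1) (by omega)
      have h2 := ih n (by omega)
      rw [cfQ_rec, pn_rec, eta_rec hα hirr]
      push_cast
      ring_nf
      ring_nf at h1 h2
      nlinarith [h1, h2, sq_nonneg ((-1:ℝ)^n)]

/-- q_{n+1} η_n + q_n η_{n+1} = 1 -/
lemma eta_q (n : ℕ) : (cfQ α (n+1) : ℝ) * eta α n + (cfQ α n : ℝ) * eta α (n+1) = 1 := by
  induction n with
  | zero =>
    rw [cfQ_zero, cfQ_one, eta_zero, eta_succ, eta_zero]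
    have h := al_mul hα hirr 0
    rw [al_zero] at h
    have : (cfA α 1 : ℝ) = (cfA α (0+1) : ℝ) := by norm_num
    rw [this]
    linear_combination h
  | succ n ih =>
    rw [cfQ_rec, eta_rec hα hirr]
    push_cast
    nlinarith [ih]

lemma q_eta_lt_one (n : ℕ) : (cfQ α n : ℝ) * eta α n < 1 := by
  have h := eta_q hα hirr n
  have h1 : (cfQ α n : ℝ) ≤ (cfQ α (n+1) : ℝ) := by exact_mod_cast cfQ_mono hα hirr n
  have h2 := eta_pos hα hirr n
  have h3 := eta_pos hα hirr (n+1)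
  have h4 : (1:ℝ) ≤ (cfQ α n : ℝ) := by exact_mod_cast cfQ_pos hα hirr n
  nlinarith

omit hα hirr in
/-- determinant -/
lemma det_id (n : ℕ) : (pn α (n+1) : ℤ) * cfQ α n - (pn α n : ℤ) * cfQ α (n+1) = (-1)^n := by
  induction n with
  | zero => simp [pn, cfQ_zero]
  | succ n ih =>
    rw [cfQ_rec, pn_rec]
    push_cast
    push_cast at ih
    ring_nf
    ring_nf at ih
    nlinarith [ih]

omit hα hirr in
lemma coprime_pq (n : ℕ) : Nat.Coprime (pn α n) (cfQ α n) := by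
  match n with
  | 0 => simp [pn, cfQ_zero]
  | n+1 =>
    have h := det_id (α := α) n
    rw [← Nat.isCoprime_iff_coprime]
    exact ⟨(-1)^n * (cfQ α n : ℤ), -((-1)^n) * (pn α n : ℤ), by
      have : ((-1:ℤ))^n * ((-1:ℤ))^n = 1 := by
        rw [← pow_add]; exact (neg_one_pow_eq_one_iff_even (by norm_num)).mpr ⟨n, rfl⟩
      linear_combination ((-1:ℤ)^n) * h + this⟩


/-! ### The counting lemma -/

omit hα hirr in
lemma filter_le_card (q K : ℕ) :
    (((Finset.range q).filter (fun j => j ≤ K)).card) ≤ K + 1 := by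
  apply le_trans (Finset.card_le_card (fun j hj => ?_)) (le_of_eq (Finset.card_range (K+1)))
  simp only [Finset.mem_filter, Finset.mem_range] at hj ⊢
  omega

omit hα hirr in
set_option maxHeartbeats 1000000 in
lemma countA (q : ℕ) (hq : 4 ≤ q) (c : ℝ) (hc0 : 0 ≤ c) (hc1 : c < 1/q)
    (s : ℕ → ℝ)
    (hs : (∀ j, j < q → 0 ≤ s j ∧ s j < 1/q) ∨ (∀ j, j < q → -(1/q) < s j ∧ s j ≤ 0)) :
    |2 * ((((Finset.range q).filter
        (fun (j : ℕ) => Int.fract (c + (j:ℝ)/(q:ℝ) + s j) ≤ 1/2)).card : ℤ) : ℤ) - q| ≤ 3 := by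
  have hQ : (0:ℝ) < (q:ℝ) := by positivity
  have hQ4 : (4:ℝ) ≤ (q:ℝ) := by exact_mod_cast hq
  set Sin := (Finset.range q).filter
      (fun (j : ℕ) => Int.fract (c + (j:ℝ)/(q:ℝ) + s j) ≤ 1/2) with hSin
  rw [abs_le]
  rcases hs with hs | hs
  · -- s j ∈ [0, 1/q)
    constructor
    · -- lower bound
      have hsub : Finset.range ((q-4)/2 + 1) ⊆ Sin := by
        intro j hj
        rw [Finset.mem_range] at hj
        have hj2 : 2*j ≤ q - 4 := by omega
        have hjq : j < q := by omega
        have hjr : 2*(j:ℝ) ≤ (q:ℝ) - 4 := by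
          have : ((2*j:ℕ):ℝ) ≤ ((q-4:ℕ):ℝ) := by exact_mod_cast hj2
          push_cast [Nat.cast_sub (by omega : 4 ≤ q)] at this
          linarith
        obtain ⟨hs0, hs1⟩ := hs j hjq
        have hjdiv : (j:ℝ)/(q:ℝ) ≤ 1/2 - 2/(q:ℝ) := by
          rw [div_le_iff₀ hQ]
          have : (1/2 - 2/(q:ℝ)) * (q:ℝ) = (q:ℝ)/2 - 2 := by field_simp
          rw [this]; linarith
        have h0 : 0 ≤ c + (j:ℝ)/(q:ℝ) + s j := by positivity
        have h1 : c + (j:ℝ)/(q:ℝ) + s j < 1/2 := by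
          have h2q : (1:ℝ)/q + 1/q = 2/(q:ℝ) := by ring
          linarith
        rw [hSin, Finset.mem_filter, Finset.mem_range]
        refine ⟨hjq, ?_⟩
        rw [Int.fract_eq_self.mpr ⟨h0, by linarith⟩]
        linarith
      have hcard : (q-4)/2 + 1 ≤ Sin.card := by
        calc (q-4)/2 + 1 = (Finset.range ((q-4)/2 + 1)).card := (Finset.card_range _).symm
          _ ≤ Sin.card := Finset.card_le_card hsub
      omega
    · -- upper bound
      rcases eq_or_lt_of_le hc0 with hc | hc
      · -- c = 0
        have hsub : Sin ⊆ (Finset.range q).filter (fun j => 2*j ≤ q) := by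
          intro j hj
          rw [hSin, Finset.mem_filter, Finset.mem_range] at hj
          obtain ⟨hjq, hy⟩ := hj
          rw [Finset.mem_filter, Finset.mem_range]
          refine ⟨hjq, ?_⟩
          by_contra hcon
          have h2j : (q:ℝ) < 2*(j:ℝ) := by exact_mod_cast (by omega : q < 2*j)
          have hj1 : (j:ℝ) ≤ (q:ℝ) - 1 := by
            have : (j:ℝ) + 1 ≤ (q:ℝ) := by exact_mod_cast hjq
            linarith
          obtain ⟨hs0, hs1⟩ := hs j hjq
          have ht : (1:ℝ)/2 < (j:ℝ)/(q:ℝ) := by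
            rw [lt_div_iff₀ hQ]; linarith
          have ht2 : (j:ℝ)/(q:ℝ) ≤ 1 - 1/(q:ℝ) := by
            rw [div_le_iff₀ hQ]
            have : (1 - 1/(q:ℝ)) * (q:ℝ) = (q:ℝ) - 1 := by field_simp
            rw [this]; exact hj1
          have hu1 : c + (j:ℝ)/(q:ℝ) + s j < 1 := by rw [← hc]; linarith
          have hu0 : 0 ≤ c + (j:ℝ)/(q:ℝ) + s j := by positivity
          rw [Int.fract_eq_self.mpr ⟨hu0, hu1⟩] at hy
          rw [← hc] at hy
          linarith
        have hcard : Sin.card ≤ q/2 + 1 := by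
          refine le_trans (Finset.card_le_card hsub) ?_
          refine le_trans (Finset.card_le_card (fun j hj => ?_)) (filter_le_card q (q/2))
          simp only [Finset.mem_filter, Finset.mem_range] at hj ⊢
          omega
        omega
      · -- 0 < c
        have hsub : Sin ⊆ (Finset.range q).filter (fun j => 2*j < q) ∪ {q-1} := by
          intro j hj
          rw [hSin, Finset.mem_filter, Finset.mem_range] at hj
          obtain ⟨hjq, hy⟩ := hj
          rw [Finset.mem_union, Finset.mem_filter, Finset.mem_range, Finset.mem_singleton]
          by_cases hje : j = q - 1
          · exact Or.inr hje
          left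
          refine ⟨hjq, ?_⟩
          by_contra hcon
          have h2j : (q:ℝ) ≤ 2*(j:ℝ) := by exact_mod_cast (by omega : q ≤ 2*j)
          have hj1 : (j:ℝ) ≤ (q:ℝ) - 2 := by
            have : (j:ℝ) + 2 ≤ (q:ℝ) := by exact_mod_cast (by omega : j + 2 ≤ q)
            linarith
          obtain ⟨hs0, hs1⟩ := hs j hjq
          have ht : (1:ℝ)/2 ≤ (j:ℝ)/(q:ℝ) := by
            rw [le_div_iff₀ hQ]; linarith
          have ht2 : (j:ℝ)/(q:ℝ) ≤ 1 - 2/(q:ℝ) := by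
            rw [div_le_iff₀ hQ]
            have : (1 - 2/(q:ℝ)) * (q:ℝ) = (q:ℝ) - 2 := by field_simp
            rw [this]; exact hj1
          have hu1 : c + (j:ℝ)/(q:ℝ) + s j < 1 := by
            have h2q : (1:ℝ)/q + 1/q = 2/(q:ℝ) := by ring
            linarith
          have hu0 : 0 ≤ c + (j:ℝ)/(q:ℝ) + s j := by positivity
          rw [Int.fract_eq_self.mpr ⟨hu0, hu1⟩] at hy
          linarith
        have hcard : Sin.card ≤ ((q-1)/2 + 1) + 1 := by
          refine le_trans (Finset.card_le_card hsub) ?_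
          refine le_trans (Finset.card_union_le _ _) ?_
          have h1 : ((Finset.range q).filter (fun j => 2*j < q)).card ≤ (q-1)/2 + 1 := by
            refine le_trans (Finset.card_le_card (fun j hj => ?_)) (filter_le_card q ((q-1)/2))
            simp only [Finset.mem_filter, Finset.mem_range] at hj ⊢
            omega
          simp only [Finset.card_singleton]
          omega
        omega
  · -- s j ∈ (-1/q, 0]
    constructor
    · -- lower bound
      have hsub : Finset.Icc 1 ((q-2)/2) ⊆ Sin := by
        intro j hj
        rw [Finset.mem_Icc] at hj
        obtain ⟨hj1, hj2⟩ := hj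
        have hjq : j < q := by omega
        have hjr : 2*(j:ℝ) ≤ (q:ℝ) - 2 := by
          have h2 : 2*j ≤ q - 2 := by omega
          have : ((2*j:ℕ):ℝ) ≤ ((q-2:ℕ):ℝ) := by exact_mod_cast h2
          push_cast [Nat.cast_sub (by omega : 2 ≤ q)] at this
          linarith
        obtain ⟨hs0, hs1⟩ := hs j hjq
        have hjdiv : (j:ℝ)/(q:ℝ) ≤ 1/2 - 1/(q:ℝ) := by
          rw [div_le_iff₀ hQ]
          have : (1/2 - 1/(q:ℝ)) * (q:ℝ) = (q:ℝ)/2 - 1 := by field_simp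
          rw [this]; linarith
        have hjdiv2 : 1/(q:ℝ) ≤ (j:ℝ)/(q:ℝ) := by
          gcongr
          exact_mod_cast hj1
        have hu0 : 0 < c + (j:ℝ)/(q:ℝ) + s j := by linarith
        have hu1 : c + (j:ℝ)/(q:ℝ) + s j < 1/2 := by
          have h2q : (1:ℝ)/q + 1/q = 2/(q:ℝ) := by ring
          linarith
        rw [hSin, Finset.mem_filter, Finset.mem_range]
        refine ⟨hjq, ?_⟩
        rw [Int.fract_eq_self.mpr ⟨le_of_lt hu0, by linarith⟩]
        linarith
      have hcard : (q-2)/2 ≤ Sin.card := by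
        calc (q-2)/2 = (Finset.Icc 1 ((q-2)/2)).card := by rw [Nat.card_Icc]; omega
          _ ≤ Sin.card := Finset.card_le_card hsub
      omega
    · -- upper bound, s ≤ 0 case
      have hU2 : ((Finset.range q).filter
          (fun (j:ℕ) => 1/2 < c + (j:ℝ)/(q:ℝ) ∧ c + (j:ℝ)/(q:ℝ) < 1/2 + 1/(q:ℝ))).card ≤ 1 := by
        rw [Finset.card_le_one]
        intro a ha b hb
        simp only [Finset.mem_filter, Finset.mem_range] at ha hb
        obtain ⟨-, ha1, ha2⟩ := ha
        obtain ⟨-, hb1, hb2⟩ := hb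
        have h1 : (a:ℝ)/(q:ℝ) - (b:ℝ)/(q:ℝ) < 1/(q:ℝ) := by linarith
        have h2 : (b:ℝ)/(q:ℝ) - (a:ℝ)/(q:ℝ) < 1/(q:ℝ) := by linarith
        have h1' : (a:ℝ) - (b:ℝ) < 1 := by
          rw [div_sub_div_same, div_lt_div_iff₀ hQ hQ] at h1
          nlinarith
        have h2' : (b:ℝ) - (a:ℝ) < 1 := by
          rw [div_sub_div_same, div_lt_div_iff₀ hQ hQ] at h2
          nlinarith
        have : a = b := by
          have ha' : (a:ℝ) < (b:ℝ) + 1 := by linarith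
          have hb' : (b:ℝ) < (a:ℝ) + 1 := by linarith
          have : a < b + 1 := by exact_mod_cast ha'
          have : b < a + 1 := by exact_mod_cast hb'
          omega
        exact this
      have hincl : ∀ j ∈ Sin, ¬ (2*j ≤ q) →
          (1/2 < c + (j:ℝ)/(q:ℝ) ∧ c + (j:ℝ)/(q:ℝ) < 1/2 + 1/(q:ℝ)) := by
        intro j hj hcon
        rw [hSin, Finset.mem_filter, Finset.mem_range] at hj
        obtain ⟨hjq, hy⟩ := hj
        obtain ⟨hs0, hs1⟩ := hs j hjq
        have h2j : (q:ℝ) < 2*(j:ℝ) := by exact_mod_cast (by omega : q < 2*j)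
        have ht : (1:ℝ)/2 < c + (j:ℝ)/(q:ℝ) := by
          have : (1:ℝ)/2 < (j:ℝ)/(q:ℝ) := by rw [lt_div_iff₀ hQ]; linarith
          linarith
        refine ⟨ht, ?_⟩
        by_contra hcon2
        push_neg at hcon2
        have hj1 : (j:ℝ) ≤ (q:ℝ) - 1 := by
          have : (j:ℝ) + 1 ≤ (q:ℝ) := by exact_mod_cast hjq
          linarith
        have ht2 : c + (j:ℝ)/(q:ℝ) < 1 := by
          have : (j:ℝ)/(q:ℝ) ≤ 1 - 1/(q:ℝ) := by
            rw [div_le_iff₀ hQ]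
            have : (1 - 1/(q:ℝ)) * (q:ℝ) = (q:ℝ) - 1 := by field_simp
            rw [this]; exact hj1
          linarith
        have hu0 : 0 ≤ c + (j:ℝ)/(q:ℝ) + s j := by linarith
        have hu1 : c + (j:ℝ)/(q:ℝ) + s j < 1 := by linarith
        rw [Int.fract_eq_self.mpr ⟨hu0, hu1⟩] at hy
        linarith
      have hsub : Sin ⊆ (Finset.range q).filter (fun (j:ℕ) => 2*j ≤ q) ∪
          (Finset.range q).filter
          (fun (j:ℕ) => 1/2 < c + (j:ℝ)/(q:ℝ) ∧ c + (j:ℝ)/(q:ℝ) < 1/2 + 1/(q:ℝ)) := by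
        intro j hj
        have hjq : j < q := by
          have := hj; rw [hSin, Finset.mem_filter, Finset.mem_range] at this; exact this.1
        simp only [Finset.mem_union, Finset.mem_filter, Finset.mem_range]
        by_cases h2j : 2*j ≤ q
        · exact Or.inl ⟨hjq, h2j⟩
        · exact Or.inr ⟨hjq, hincl j hj h2j⟩
      -- now split on parity / c = 0 for the sharp bound
      rcases eq_or_lt_of_le hc0 with hc | hc
      · -- c = 0
        rcases Nat.even_or_odd q with hpar | hpar
        · -- q even : U2' empty
          have hU2e : ((Finset.range q).filter
              (fun (j:ℕ) => 1/2 < c + (j:ℝ)/(q:ℝ) ∧ c + (j:ℝ)/(q:ℝ) < 1/2 + 1/(q:ℝ))) = ∅ := by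
            rw [Finset.filter_eq_empty_iff]
            rintro j hj ⟨h1, h2⟩
            have h1' : (1:ℝ)/2 < (j:ℝ)/(q:ℝ) := by rw [← hc] at h1; linarith
            have h2' : (j:ℝ)/(q:ℝ) < 1/2 + 1/(q:ℝ) := by rw [← hc] at h2; linarith
            have e1 : (q:ℝ) < 2*(j:ℝ) := by
              rw [lt_div_iff₀ hQ] at h1'; linarith
            have e2 : 2*(j:ℝ) < (q:ℝ) + 2 := by
              rw [div_lt_iff₀ hQ] at h2'
              have h3 : (1/2 + 1/(q:ℝ)) * (q:ℝ) = (q:ℝ)/2 + 1 := by field_simp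
              rw [h3] at h2'; linarith
            have e1' : q < 2*j := by exact_mod_cast e1
            have e2' : 2*j < q + 2 := by exact_mod_cast e2
            obtain ⟨m, hm⟩ := hpar
            omega
          have hcard : Sin.card ≤ q/2 + 1 := by
            refine le_trans (Finset.card_le_card hsub) ?_
            rw [Finset.union_comm, hU2e, Finset.empty_union]
            refine le_trans (Finset.card_le_card (fun j hj => ?_)) (filter_le_card q (q/2))
            simp only [Finset.mem_filter, Finset.mem_range] at hj ⊢
            omega
          omega
        · -- q odd
          have hcard : Sin.card ≤ ((q-1)/2 + 1) + 1 := by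
            refine le_trans (Finset.card_le_card hsub) ?_
            refine le_trans (Finset.card_union_le _ _) ?_
            have h1 : ((Finset.range q).filter (fun j => 2*j ≤ q)).card ≤ (q-1)/2 + 1 := by
              refine le_trans (Finset.card_le_card (fun j hj => ?_)) (filter_le_card q ((q-1)/2))
              simp only [Finset.mem_filter, Finset.mem_range] at hj ⊢
              obtain ⟨m, hm⟩ := hpar
              omega
            omega
          obtain ⟨m, hm⟩ := hpar
          omega
      · -- 0 < c : sharpen first filter to 2*j < q
        have hsub2 : Sin ⊆ (Finset.range q).filter (fun (j:ℕ) => 2*j < q) ∪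
            (Finset.range q).filter
            (fun (j:ℕ) => 1/2 < c + (j:ℝ)/(q:ℝ) ∧ c + (j:ℝ)/(q:ℝ) < 1/2 + 1/(q:ℝ)) := by
          intro j hj
          have hjq : j < q := by
            have := hj; rw [hSin, Finset.mem_filter, Finset.mem_range] at this; exact this.1
          simp only [Finset.mem_union, Finset.mem_filter, Finset.mem_range]
          by_cases h2j : 2*j < q
          · exact Or.inl ⟨hjq, h2j⟩
          · -- 2*j ≥ q; show window membership
            right
            refine ⟨hjq, ?_, ?_⟩
            · have : (q:ℝ) ≤ 2*(j:ℝ) := by exact_mod_cast (by omega : q ≤ 2*j)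
              have : (1:ℝ)/2 ≤ (j:ℝ)/(q:ℝ) := by rw [le_div_iff₀ hQ]; linarith
              linarith
            · by_contra hcon2
              push_neg at hcon2
              -- then j ∉ window and 2j ≥ q ; replicate contradiction
              rw [hSin, Finset.mem_filter, Finset.mem_range] at hj
              obtain ⟨-, hy⟩ := hj
              obtain ⟨hs0, hs1⟩ := hs j hjq
              have hge : (1:ℝ)/2 < c + (j:ℝ)/(q:ℝ) := by
                have : (q:ℝ) ≤ 2*(j:ℝ) := by exact_mod_cast (by omega : q ≤ 2*j)
                have : (1:ℝ)/2 ≤ (j:ℝ)/(q:ℝ) := by rw [le_div_iff₀ hQ]; linarith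
                linarith
              have hj1 : (j:ℝ) ≤ (q:ℝ) - 1 := by
                have : (j:ℝ) + 1 ≤ (q:ℝ) := by exact_mod_cast hjq
                linarith
              have ht2 : c + (j:ℝ)/(q:ℝ) < 1 := by
                have : (j:ℝ)/(q:ℝ) ≤ 1 - 1/(q:ℝ) := by
                  rw [div_le_iff₀ hQ]
                  have : (1 - 1/(q:ℝ)) * (q:ℝ) = (q:ℝ) - 1 := by field_simp
                  rw [this]; exact hj1
                linarith
              have hu0 : 0 ≤ c + (j:ℝ)/(q:ℝ) + s j := by linarith
              have hu1 : c + (j:ℝ)/(q:ℝ) + s j < 1 := by linarith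
              rw [Int.fract_eq_self.mpr ⟨hu0, hu1⟩] at hy
              linarith
        have hcard : Sin.card ≤ ((q-1)/2 + 1) + 1 := by
          refine le_trans (Finset.card_le_card hsub2) ?_
          refine le_trans (Finset.card_union_le _ _) ?_
          have h1 : ((Finset.range q).filter (fun j => 2*j < q)).card ≤ (q-1)/2 + 1 := by
            refine le_trans (Finset.card_le_card (fun j hj => ?_)) (filter_le_card q ((q-1)/2))
            simp only [Finset.mem_filter, Finset.mem_range] at hj ⊢
            omega
          omega
        omega


/-! ### transfer and Denjoy–Koksma -/

omit hα hirr in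
lemma card_transfer (q p : ℕ) (hq : 0 < q) (hcop : Nat.Coprime p q) (m : ℤ)
    (P : ℕ → Prop) [DecidablePred P] :
    ((Finset.range q).filter
      (fun (i : ℕ) => P (((m : ZMod q) + (i : ZMod q) * (p : ZMod q)).val))).card
    = ((Finset.range q).filter P).card := by
  haveI : NeZero q := ⟨by omega⟩
  set u : (ZMod q)ˣ := ZMod.unitOfCoprime p hcop with hu
  have hup : (u : ZMod q) = (p : ZMod q) := rfl
  apply Finset.card_nbij'
    (i := fun (i : ℕ) => ((m : ZMod q) + (i : ZMod q) * (p : ZMod q)).val)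
    (j := fun (j : ℕ) => ((((j : ZMod q) - (m : ZMod q)) * ((u⁻¹ : (ZMod q)ˣ) : ZMod q)).val))
  · intro i hi
    simp only [Finset.mem_coe, Finset.mem_filter, Finset.mem_range] at hi ⊢
    exact ⟨ZMod.val_lt _, hi.2⟩
  · intro j hj
    simp only [Finset.mem_coe, Finset.mem_filter, Finset.mem_range] at hj ⊢
    have key : ((m : ZMod q) + (((((j : ZMod q) - (m : ZMod q)) *
        ((u⁻¹ : (ZMod q)ˣ) : ZMod q)).val : ℕ) : ZMod q) * (p : ZMod q)) = (j : ZMod q) := by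
      rw [ZMod.natCast_val, ZMod.cast_id, ← hup, Units.inv_mul_cancel_right, add_sub_cancel]
    rw [key, ZMod.val_cast_of_lt hj.1]
    exact ⟨ZMod.val_lt _, hj.2⟩
  · intro i hi
    simp only [Finset.mem_coe, Finset.mem_filter, Finset.mem_range] at hi ⊢
    rw [ZMod.natCast_val, ZMod.cast_id, add_sub_cancel_left, ← hup,
      Units.mul_inv_cancel_right, ZMod.val_cast_of_lt hi.1]
  · intro j hj
    simp only [Finset.mem_coe, Finset.mem_filter, Finset.mem_range] at hj ⊢
    rw [ZMod.natCast_val, ZMod.cast_id, ← hup, Units.inv_mul_cancel_right, add_sub_cancel,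
      ZMod.val_cast_of_lt hj.1]

omit hα hirr in
lemma birkhoffS_eq_count (β x : ℝ) (n : ℕ) :
    birkhoffS β x n = 2 * (((Finset.range n).filter
      (fun (i : ℕ) => Int.fract (x + i * β) ≤ 1/2)).card : ℤ) - n := by
  unfold birkhoffS birkhoffF
  rw [Finset.sum_ite, Finset.sum_const, Finset.sum_const]
  simp only [nsmul_eq_mul, mul_one, mul_neg_one]
  have h := Finset.card_filter_add_card_filter_not
    (s := Finset.range n) (p := fun i => Int.fract (x + i * β) ≤ 1/2)
  rw [Finset.card_range] at h
  omega

omit hα hirr in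
lemma abs_birkhoffS_le (β x : ℝ) (n : ℕ) : |birkhoffS β x n| ≤ (n : ℤ) := by
  unfold birkhoffS
  calc |∑ i ∈ Finset.range n, birkhoffF (x + i * β)|
      ≤ ∑ i ∈ Finset.range n, |birkhoffF (x + i * β)| := Finset.abs_sum_le_sum_abs _ _
    _ ≤ ∑ _i ∈ Finset.range n, 1 := by
        apply Finset.sum_le_sum
        intro i _
        unfold birkhoffF
        split <;> norm_num
    _ = n := by simp

omit hα hirr in
lemma fract_shift (q : ℕ) (hq : 0 < q) (p i : ℕ) (δ y : ℝ) :
    Int.fract (y + (i:ℝ) * ((p:ℝ)/(q:ℝ) + δ)) =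
    Int.fract (Int.fract ((q:ℝ)*y)/(q:ℝ)
      + ((((⌊(q:ℝ)*y⌋ + (i:ℤ)*(p:ℤ)) % (q:ℤ) : ℤ)):ℝ)/(q:ℝ) + (i:ℝ)*δ) := by
  have hQ : (0:ℝ) < (q:ℝ) := by exact_mod_cast hq
  set M : ℤ := ⌊(q:ℝ)*y⌋ + (i:ℤ)*(p:ℤ) with hM
  have hsplit : (M:ℝ) = ((M % (q:ℤ) : ℤ):ℝ) + (q:ℝ) * ((M / (q:ℤ) : ℤ):ℝ) := by
    exact_mod_cast (Int.emod_add_mul_ediv M (q:ℤ)).symm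
  have hy : (q:ℝ)*y = (⌊(q:ℝ)*y⌋ : ℝ) + Int.fract ((q:ℝ)*y) := by
    rw [Int.fract]; ring
  have hval : y + (i:ℝ) * ((p:ℝ)/(q:ℝ) + δ) =
      (Int.fract ((q:ℝ)*y)/(q:ℝ) + ((M % (q:ℤ) : ℤ):ℝ)/(q:ℝ) + (i:ℝ)*δ)
      + ((M / (q:ℤ) : ℤ):ℝ) := by
    have hfr : Int.fract ((q:ℝ)*y) = (q:ℝ)*y - (⌊(q:ℝ)*y⌋ : ℝ) := rfl
    rw [hfr]
    have hsplit2 : ((M % (q:ℤ) : ℤ) : ℝ)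
        = (⌊(q:ℝ)*y⌋ : ℝ) + (i:ℝ)*(p:ℝ) - (q:ℝ)*((M / (q:ℤ) : ℤ) : ℝ) := by
      push_cast [hM] at hsplit ⊢
      linarith [hsplit]
    rw [hsplit2]
    field_simp
    ring
  rw [hval, Int.fract_add_intCast]

lemma dk (k : ℕ) (y : ℝ) : |birkhoffS α y (cfQ α k)| ≤ 3 := by
  have hq1 : 1 ≤ cfQ α k := cfQ_pos hα hirr k
  by_cases hq4 : cfQ α k < 4
  · calc |birkhoffS α y (cfQ α k)| ≤ (cfQ α k : ℤ) := abs_birkhoffS_le α y _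
      _ ≤ 3 := by exact_mod_cast (by omega : cfQ α k ≤ 3)
  push_neg at hq4
  set q := cfQ α k with hdefq
  set p := pn α k with hdefp
  have hQ : (0:ℝ) < (q:ℝ) := by positivity
  have hη0 : 0 < eta α k := eta_pos hα hirr k
  have hqη : (q:ℝ) * eta α k < 1 := q_eta_lt_one hα hirr k
  have hkey : (q:ℝ) * α - (p:ℝ) = (-1)^k * eta α k := key_id hα hirr k
  set δ : ℝ := (-1)^k * eta α k / (q:ℝ) with hdefδ
  have hαpq : α = (p:ℝ)/(q:ℝ) + δ := by
    rw [hdefδ]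
    field_simp
    linarith [hkey]
  set m : ℤ := ⌊(q:ℝ)*y⌋ with hdefm
  set c : ℝ := Int.fract ((q:ℝ)*y)/(q:ℝ) with hdefc
  haveI : NeZero q := ⟨by omega⟩
  set u : (ZMod q)ˣ := ZMod.unitOfCoprime p (coprime_pq k) with hu
  have hup : (u : ZMod q) = (p : ZMod q) := rfl
  set sfun : ℕ → ℝ := fun j =>
    (((((j : ZMod q) - (m : ZMod q)) * ((u⁻¹ : (ZMod q)ˣ) : ZMod q)).val : ℕ) : ℝ) * δ
    with hsfun
  set P : ℕ → Prop := fun j => Int.fract (c + (j:ℝ)/(q:ℝ) + sfun j) ≤ 1/2 with hP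
  -- each point identity
  have hpoint : ∀ i ∈ Finset.range q,
      (Int.fract (y + (i:ℝ) * α) ≤ 1/2) ↔
        P (((m : ZMod q) + (i : ZMod q) * (p : ZMod q)).val) := by
    intro i hi
    rw [Finset.mem_range] at hi
    have hinv : ((((((m : ZMod q) + (i : ZMod q) * (p : ZMod q)).val : ℕ) : ZMod q)
        - (m : ZMod q)) * ((u⁻¹ : (ZMod q)ˣ) : ZMod q)).val = i := by
      rw [ZMod.natCast_val, ZMod.cast_id, add_sub_cancel_left, ← hup,
        Units.mul_inv_cancel_right, ZMod.val_cast_of_lt hi]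
    have hval : ((((m : ZMod q) + (i : ZMod q) * (p : ZMod q)).val : ℕ) : ℝ)
        = (((m + (i:ℤ)*(p:ℤ)) % (q:ℤ) : ℤ) : ℝ) := by
      have h1 : ((m : ZMod q) + (i : ZMod q) * (p : ZMod q))
          = (((m + (i:ℤ)*(p:ℤ)) : ℤ) : ZMod q) := by push_cast; ring
      rw [h1]
      have h2 : (((((m + (i:ℤ)*(p:ℤ)) : ℤ) : ZMod q)).val : ℤ)
          = (m + (i:ℤ)*(p:ℤ)) % (q:ℤ) := ZMod.val_intCast _
      exact_mod_cast h2
    have hmid : Int.fract (y + (i:ℝ) * α)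
        = Int.fract (c + (((m + (i:ℤ)*(p:ℤ)) % (q:ℤ) : ℤ) : ℝ)/(q:ℝ) + (i:ℝ)*δ) := by
      conv_lhs => rw [hαpq]
      rw [fract_shift q (by omega) p i δ y]
    constructor
    · intro h
      show Int.fract (c + _ + sfun _) ≤ 1/2
      rw [hsfun]
      simp only [hinv, hval]
      rw [← hmid]
      exact h
    · intro h
      rw [hP] at h
      simp only [hsfun, hinv, hval] at h
      rw [hmid]
      exact h
  -- counting
  rw [birkhoffS_eq_count]
  have hcount : ((Finset.range q).filter (fun (i : ℕ) => Int.fract (y + (i:ℝ) * α) ≤ 1/2)).card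
      = ((Finset.range q).filter P).card := by
    rw [Finset.filter_congr hpoint]
    exact card_transfer q p (by omega) (coprime_pq k) m P
  rw [hcount]
  -- apply countA
  have hc0 : 0 ≤ c := by
    rw [hdefc]
    exact div_nonneg (Int.fract_nonneg _) (le_of_lt hQ)
  have hc1 : c < 1/(q:ℝ) := by
    rw [hdefc]
    gcongr
    · exact Int.fract_lt_one _
  have hηq1 : ((q:ℝ) - 1) * eta α k < 1 := by nlinarith
  have hsb : (∀ j, j < q → 0 ≤ sfun j ∧ sfun j < 1/(q:ℝ)) ∨
      (∀ j, j < q → -(1/(q:ℝ)) < sfun j ∧ sfun j ≤ 0) := by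
    have hbound : ∀ j : ℕ,
        0 ≤ (((((j : ZMod q) - (m : ZMod q)) * ((u⁻¹ : (ZMod q)ˣ) : ZMod q)).val : ℕ) : ℝ)
        ∧ (((((j : ZMod q) - (m : ZMod q)) * ((u⁻¹ : (ZMod q)ˣ) : ZMod q)).val : ℕ) : ℝ)
          ≤ (q:ℝ) - 1 := by
      intro j
      constructor
      · positivity
      · have h1 := ZMod.val_lt ((((j : ZMod q) - (m : ZMod q)) * ((u⁻¹ : (ZMod q)ˣ) : ZMod q)))
        have h2 : ((((j : ZMod q) - (m : ZMod q)) * ((u⁻¹ : (ZMod q)ˣ) : ZMod q)).val : ℕ) + 1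
            ≤ q := by omega
        have h3 : (((((j : ZMod q) - (m : ZMod q)) * ((u⁻¹ : (ZMod q)ˣ) : ZMod q)).val : ℕ) : ℝ)
            + 1 ≤ (q:ℝ) := by exact_mod_cast h2
        linarith
    rcases Nat.even_or_odd k with hpar | hpar
    · left
      intro j hj
      have hδ : δ = (eta α k)/(q:ℝ) := by rw [hdefδ, hpar.neg_one_pow, one_mul]
      obtain ⟨hb0, hb1⟩ := hbound j
      constructor
      · rw [hsfun]
        simp only []
        rw [hδ]
        positivity
      · rw [hsfun]
        simp only []
        rw [hδ, mul_div_assoc']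
        gcongr (?_)/(q:ℝ)
        nlinarith
    · right
      intro j hj
      have hδ : δ = -((eta α k)/(q:ℝ)) := by
        rw [hdefδ, hpar.neg_one_pow]; ring
      obtain ⟨hb0, hb1⟩ := hbound j
      constructor
      · rw [hsfun]
        simp only []
        rw [hδ, mul_neg, neg_lt_neg_iff, mul_div_assoc']
        gcongr (?_)/(q:ℝ)
        nlinarith
      · rw [hsfun]
        simp only []
        rw [hδ, mul_neg, neg_nonpos]
        positivity
  have := countA q hq4 c hc0 hc1 sfun hsb
  exact this


/-! ### blocks and main induction -/

omit hα hirr in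
lemma birkhoffS_add (β x : ℝ) (a b : ℕ) :
    birkhoffS β x (a + b) = birkhoffS β x a + birkhoffS β (x + (a:ℝ) * β) b := by
  unfold birkhoffS
  rw [Finset.sum_range_add]
  congr 1
  apply Finset.sum_congr rfl
  intro i _
  have : x + ((a + i : ℕ):ℝ) * β = (x + (a:ℝ)*β) + (i:ℝ)*β := by push_cast; ring
  rw [this]

lemma block_bound (k : ℕ) (b : ℕ) (y : ℝ) :
    |birkhoffS α y (b * cfQ α k)| ≤ 3 * (b : ℤ) := by
  induction b generalizing y with
  | zero => simp [birkhoffS]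
  | succ b ih =>
    have hsplit : (b+1) * cfQ α k = b * cfQ α k + cfQ α k := by ring
    rw [hsplit, birkhoffS_add]
    calc |birkhoffS α y (b * cfQ α k)
          + birkhoffS α (y + ((b * cfQ α k : ℕ):ℝ) * α) (cfQ α k)|
        ≤ |birkhoffS α y (b * cfQ α k)|
          + |birkhoffS α (y + ((b * cfQ α k : ℕ):ℝ) * α) (cfQ α k)| := abs_add_le _ _
      _ ≤ 3 * (b:ℤ) + 3 := add_le_add (ih y) (dk hα hirr k _)
      _ = 3 * ((b:ℤ)+1) := by ring
    
omit hα hirr in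
lemma cfSumA_one : cfSumA α 1 = cfA α 1 := by simp [cfSumA]

omit hα hirr in
lemma cfSumA_succ (n : ℕ) (hn : 1 ≤ n) : cfSumA α (n+1) = cfSumA α n + cfA α (n+1) := by
  unfold cfSumA
  rw [← Finset.sum_Icc_succ_top (by omega : 1 ≤ n + 1)]

lemma cfSumA_pos (n : ℕ) (hn : 1 ≤ n) : 1 ≤ cfSumA α n := by
  have h1 : cfA α 1 ≤ cfSumA α n := by
    apply Finset.single_le_sum (f := fun i => cfA α i) (fun i _ => Nat.zero_le _)
    rw [Finset.mem_Icc]; omega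
  have h2 : 1 ≤ cfA α 1 := by
    have := cfA_pos α hα hirr 0
    simpa using this
  omega

lemma main_bound (n : ℕ) (hn : 1 ≤ n) :
    ∀ (y : ℝ) (i : ℕ), 1 ≤ i → i ≤ cfQ α n → |birkhoffS α y i| ≤ 3 * (cfSumA α n : ℤ) := by
  induction n, hn using Nat.le_induction with
  | base =>
    intro y i h1 h2
    rw [cfQ_one] at h2
    rw [cfSumA_one]
    have hA := cfA_pos α hα hirr 0
    simp only [zero_add] at hA
    calc |birkhoffS α y i| ≤ (i : ℤ) := abs_birkhoffS_le α y i
      _ ≤ 3 * (cfA α 1 : ℤ) := by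
          have : (i:ℤ) ≤ (cfA α 1 : ℤ) := by exact_mod_cast h2
          have : (1:ℤ) ≤ (cfA α 1 : ℤ) := by exact_mod_cast hA
          omega
  | succ n hn ih =>
    intro y i h1 h2
    obtain ⟨m, rfl⟩ : ∃ m, n = m + 1 := ⟨n - 1, by omega⟩
    have hqrec : cfQ α (m + 1 + 1) = cfA α (m+2) * cfQ α (m+1) + cfQ α m := cfQ_rec m
    set q := cfQ α (m+1) with hdefq
    set a := cfA α (m+2) with hdefa
    have hq0 : 1 ≤ q := cfQ_pos hα hirr (m+1)
    have hqm : cfQ α m ≤ q := cfQ_mono hα hirr m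
    set b := i / q with hdefb
    set r := i % q with hdefr
    have hieq : i = b * q + r := by
      have h := Nat.div_add_mod i q
      rw [← hdefb, ← hdefr, Nat.mul_comm q b] at h
      omega
    have hb1 : i ≤ (a + 1) * q := by
      calc i ≤ cfQ α (m+1+1) := h2
        _ = a * q + cfQ α m := hqrec
        _ ≤ (a+1)*q := by nlinarith
    have hb : b ≤ a + 1 := by
      rw [hdefb]
      calc i / q ≤ ((a+1)*q)/q := Nat.div_le_div_right hb1
        _ = a + 1 := Nat.mul_div_cancel _ (by omega)
    have hAn : 1 ≤ cfSumA α (m+1) := cfSumA_pos hα hirr (m+1) (by omega)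
    have hArec : (cfSumA α (m+2) : ℤ) = (cfSumA α (m+1) : ℤ) + (a : ℤ) := by
      rw [cfSumA_succ (m+1) (by omega)]; push_cast; ring
    have hblock := block_bound hα hirr (m+1) b y
    rw [hieq, birkhoffS_add]
    by_cases hr : r = 0
    · -- i = b*q
      rw [hr]
      have hbpos : 1 ≤ b := by
        rcases Nat.eq_zero_or_pos b with hb0 | hb0
        · rw [hb0] at hieq; simp [hr] at hieq; omega
        · exact hb0
      calc |birkhoffS α y (b * q) + birkhoffS α (y + ((b*q : ℕ):ℝ)*α) 0|
          = |birkhoffS α y (b * q)| := by simp [birkhoffS]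
        _ ≤ 3 * (b:ℤ) := hblock
        _ ≤ 3 * (cfSumA α (m+2) : ℤ) := by
            rw [hArec]
            have hb' : (b:ℤ) ≤ (a:ℤ) + 1 := by exact_mod_cast hb
            have hAn' : (1:ℤ) ≤ (cfSumA α (m+1) : ℤ) := by exact_mod_cast hAn
            nlinarith
    · -- r ≥ 1
      have hrq : r < q := Nat.mod_lt _ (by omega)
      have hba : b ≤ a := by
        by_contra hc
        push_neg at hc
        have h3 : (a+1)*q ≤ b*q := Nat.mul_le_mul_right q hc
        have h4 : i ≤ a*q + q := le_trans h2 (by rw [hqrec]; omega)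
        have h5 : a*q + q + r ≤ i := by
          rw [hieq]
          have : a*q + q + r = (a+1)*q + r := by ring
          omega
        have h6 : 1 ≤ r := Nat.pos_of_ne_zero hr
        omega
      have hrest := ih (y + ((b*q:ℕ):ℝ)*α) r (by omega) (by omega)
      calc |birkhoffS α y (b * q) + birkhoffS α (y + ((b*q : ℕ):ℝ)*α) r|
          ≤ |birkhoffS α y (b * q)| + |birkhoffS α (y + ((b*q : ℕ):ℝ)*α) r| := abs_add_le _ _
        _ ≤ 3 * (b:ℤ) + 3 * (cfSumA α (m+1) : ℤ) := add_le_add hblock hrest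
        _ ≤ 3 * (cfSumA α (m+2) : ℤ) := by
            rw [hArec]
            have hb' : (b:ℤ) ≤ (a:ℤ) := by exact_mod_cast hba
            linarith

end S7

/-- For every irrational α ∈ (0,1), x ∈ [0,1) and n ≥ 1,
    max_{1 ≤ i ≤ q_n} |S_i(α,x)| ≤ 3·A_n(α). -/
theorem stmt7 (α : ℝ) (hα : α ∈ Set.Ioo (0 : ℝ) 1) (hirr : Irrational α)
    (x : ℝ) (hx : x ∈ Set.Ico (0 : ℝ) 1) (n : ℕ) (hn : 1 ≤ n) :
    ∀ i, 1 ≤ i → i ≤ cfQ α n → |birkhoffS α x i| ≤ 3 * (cfSumA α n : ℤ) := by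
  intro i h1 h2
  exact S7.main_bound hα hirr n hn x i h1 h2
end

section
/- For every irrational α ∈ (0,1), every x ∈ [0,1), and every n ≥ 1, the Birkhoff sum of f at the time equal to the n-th convergent denominator is small: |S_{q_n}(α,x)| ≤ 3. -/
open MeasureTheory Filter
open scoped ENNReal

namespace Stmt8Aux

/-- numerators -/
def numRec (c : ℕ → ℕ) : ℕ → ℕ
  | 0 => 0
  | 1 => 1
  | n + 2 => c (n + 2) * numRec c (n + 1) + numRec c n

noncomputable def bet (α : ℝ) (i : ℕ) : ℝ := gaussMap^[i] α

lemma bet_zero (α : ℝ) : bet α 0 = α := rfl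

lemma bet_succ (α : ℝ) (i : ℕ) : bet α (i+1) = Int.fract (bet α i)⁻¹ := by
  simp [bet, Function.iterate_succ_apply', gaussMap]

variable {α : ℝ}

lemma bet_prop (hα : α ∈ Set.Ioo (0:ℝ) 1) (hirr : Irrational α) (i : ℕ) :
    bet α i ∈ Set.Ioo (0:ℝ) 1 ∧ Irrational (bet α i) := by
  induction i with
  | zero => exact ⟨hα, hirr⟩
  | succ i ih =>
    obtain ⟨⟨h0, h1⟩, hi⟩ := ih
    have hinv : Irrational (bet α i)⁻¹ := hi.inv
    have hfr : Irrational (Int.fract (bet α i)⁻¹) := by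
      rw [Int.fract]
      exact hinv.sub_intCast _
    constructor
    · rw [bet_succ]
      refine ⟨lt_of_le_of_ne (Int.fract_nonneg _) ?_, Int.fract_lt_one _⟩
      intro h
      exact (hfr.ne_int 0 (by simpa using h.symm)).elim
    · rw [bet_succ]; exact hfr

lemma cfA_succ (i : ℕ) : cfA α (i+1) = ⌊(bet α i)⁻¹⌋₊ := by
  simp [cfA, bet]

lemma one_lt_bet_inv (hα : α ∈ Set.Ioo (0:ℝ) 1) (hirr : Irrational α) (i : ℕ) :
    1 < (bet α i)⁻¹ := by
  obtain ⟨⟨h0, h1⟩, _⟩ := bet_prop hα hirr i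
  exact (one_lt_inv₀ h0).mpr h1

lemma cfA_pos (hα : α ∈ Set.Ioo (0:ℝ) 1) (hirr : Irrational α) (i : ℕ) :
    1 ≤ cfA α (i+1) := by
  rw [cfA_succ]
  have := one_lt_bet_inv hα hirr i
  have : (1:ℝ) ≤ (bet α i)⁻¹ := le_of_lt this
  exact Nat.le_floor (by exact_mod_cast this)

lemma cfA_le (hα : α ∈ Set.Ioo (0:ℝ) 1) (hirr : Irrational α) (i : ℕ) :
    (cfA α (i+1) : ℝ) ≤ (bet α i)⁻¹ := by
  rw [cfA_succ]
  exact Nat.floor_le (le_of_lt (lt_trans one_pos (one_lt_bet_inv hα hirr i)))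

lemma bet_inv_eq (hα : α ∈ Set.Ioo (0:ℝ) 1) (hirr : Irrational α) (i : ℕ) :
    (bet α i)⁻¹ = (cfA α (i+1) : ℝ) + bet α (i+1) := by
  rw [bet_succ, cfA_succ, Int.fract]
  have h : ((⌊(bet α i)⁻¹⌋₊ : ℤ) : ℝ) = ((⌊(bet α i)⁻¹⌋ : ℤ) : ℝ) :=
    congrArg _ (Int.natCast_floor_eq_floor
      (le_of_lt (lt_trans one_pos (one_lt_bet_inv hα hirr i))))
  push_cast at h ⊢
  rw [← h]; ring



lemma bet_pos (hα : α ∈ Set.Ioo (0:ℝ) 1) (hirr : Irrational α) (i : ℕ) :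
    0 < bet α i := (bet_prop hα hirr i).1.1

lemma Ekey (hα : α ∈ Set.Ioo (0:ℝ) 1) (hirr : Irrational α) :
    ∀ k, α * cfQ α (k+1) - numRec (cfA α) (k+1)
      = -(bet α (k+1)) * (α * cfQ α k - numRec (cfA α) k) := by
  intro k
  induction k with
  | zero =>
    have h0 : bet α 0 = α := rfl
    have h := bet_inv_eq hα hirr 0
    rw [h0] at h
    have hαne : α ≠ 0 := ne_of_gt hα.1
    have h' : 1 = α * (cfA α 1 : ℝ) + α * bet α 1 := by
      field_simp at h
      linarith [h]
    show α * (cfQ α 1 : ℝ) - (numRec (cfA α) 1 : ℝ) = _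
    have hq1 : (cfQ α 1 : ℝ) = (cfA α 1 : ℝ) := by norm_cast
    have hq0 : (cfQ α 0 : ℝ) = 1 := by norm_cast
    have hp1 : (numRec (cfA α) 1 : ℝ) = 1 := by norm_cast
    have hp0 : (numRec (cfA α) 0 : ℝ) = 0 := by norm_cast
    rw [hq1, hq0, hp1, hp0]
    nlinarith [h']
  | succ k ih =>
    have hb : 0 < bet α (k+1) := bet_pos hα hirr (k+1)
    have hrec : (bet α (k+1))⁻¹ = (cfA α (k+2) : ℝ) + bet α (k+2) :=
      bet_inv_eq hα hirr (k+1)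
    have hQ : (cfQ α (k+2) : ℝ) = (cfA α (k+2) : ℝ) * cfQ α (k+1) + cfQ α k := by
      show ((denomRec (cfA α) (k+2) : ℕ) : ℝ) = _
      rw [show denomRec (cfA α) (k+2) = cfA α (k+2) * denomRec (cfA α) (k+1) + denomRec (cfA α) k from rfl]
      push_cast; rfl
    have hP : (numRec (cfA α) (k+2) : ℝ) = (cfA α (k+2) : ℝ) * numRec (cfA α) (k+1) + numRec (cfA α) k := by
      rw [show numRec (cfA α) (k+2) = cfA α (k+2) * numRec (cfA α) (k+1) + numRec (cfA α) k from rfl]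
      push_cast; rfl
    have hbne : bet α (k+1) ≠ 0 := ne_of_gt hb
    -- from ih : E(k+1) = -b * E k, so E k = -E(k+1) / b
    have hEk : α * cfQ α k - numRec (cfA α) k
        = -(α * cfQ α (k+1) - numRec (cfA α) (k+1)) / bet α (k+1) := by
      field_simp
      linarith [ih]
    have hb2 : bet α (k+2) = (bet α (k+1))⁻¹ - (cfA α (k+2) : ℝ) := by linarith [hrec]
    rw [hQ, hP]
    rw [show bet α (k+1+1) = bet α (k+2) from rfl, hb2]
    field_simp
    linear_combination ih

lemma detKey (α : ℝ) : ∀ k, (numRec (cfA α) k : ℤ) * cfQ α (k+1)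
    - (numRec (cfA α) (k+1) : ℤ) * cfQ α k = (-1)^(k+1) := by
  intro k
  induction k with
  | zero =>
    show (0 : ℤ) * cfQ α 1 - 1 * cfQ α 0 = -1
    have : cfQ α 0 = 1 := rfl
    rw [this]; ring
  | succ k ih =>
    have hQ : (cfQ α (k+2) : ℤ) = (cfA α (k+2) : ℤ) * cfQ α (k+1) + cfQ α k := by
      show ((denomRec (cfA α) (k+2) : ℕ) : ℤ) = _
      rw [show denomRec (cfA α) (k+2) = cfA α (k+2) * denomRec (cfA α) (k+1) + denomRec (cfA α) k from rfl]
      push_cast; rfl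
    have hP : (numRec (cfA α) (k+2) : ℤ) = (cfA α (k+2) : ℤ) * numRec (cfA α) (k+1) + numRec (cfA α) k := by
      rw [show numRec (cfA α) (k+2) = cfA α (k+2) * numRec (cfA α) (k+1) + numRec (cfA α) k from rfl]
      push_cast; rfl
    rw [hQ, hP, pow_succ]
    nlinarith [ih]

lemma cfQ_pos (hα : α ∈ Set.Ioo (0:ℝ) 1) (hirr : Irrational α) (k : ℕ) :
    1 ≤ cfQ α k := by
  induction k using Nat.strong_induction_on with
  | _ k ih =>
    match k with
    | 0 => exact le_refl 1
    | 1 => exact cfA_pos hα hirr 0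
    | (m+2) =>
      have h1 := ih (m+1) (by omega)
      have h0 := ih m (by omega)
      have ha := cfA_pos hα hirr (m+1)
      show 1 ≤ cfA α (m+2) * denomRec (cfA α) (m+1) + denomRec (cfA α) m
      have : 1 ≤ denomRec (cfA α) (m+1) := h1
      nlinarith

lemma cfQ_succ_ge (hα : α ∈ Set.Ioo (0:ℝ) 1) (hirr : Irrational α) (k : ℕ) :
    cfQ α (k+1) + 1 ≤ cfQ α (k+2) := by
  have h1 := cfQ_pos hα hirr (k+1)
  have h0 := cfQ_pos hα hirr k
  have ha := cfA_pos hα hirr (k+1)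
  show cfQ α (k+1) + 1 ≤ cfA α (k+2) * denomRec (cfA α) (k+1) + denomRec (cfA α) k
  have e1 : cfQ α (k+1) = denomRec (cfA α) (k+1) := rfl
  have e0 : cfQ α k = denomRec (cfA α) k := rfl
  rw [e1] at h1 ⊢
  rw [e0] at h0
  nlinarith


lemma approxKey (hα : α ∈ Set.Ioo (0:ℝ) 1) (hirr : Irrational α) (k : ℕ) :
    |α * cfQ α (k+1) - numRec (cfA α) (k+1)| ≤ 1 / cfQ α (k+2) := by
  set b := bet α (k+1) with hbdef
  have hb : 0 < b := bet_pos hα hirr (k+1)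
  set Q1 := (cfQ α (k+1) : ℝ)
  set Q0 := (cfQ α k : ℝ)
  set P1 := (numRec (cfA α) (k+1) : ℝ)
  set P0 := (numRec (cfA α) k : ℝ)
  have hQ1 : (1:ℝ) ≤ Q1 := by
    show (1:ℝ) ≤ ((cfQ α (k+1) : ℕ) : ℝ)
    exact_mod_cast cfQ_pos hα hirr (k+1)
  have hQ0 : (0:ℝ) ≤ Q0 := by positivity
  have hD : 0 < Q1 + b * Q0 := by nlinarith
  have hEk := Ekey hα hirr k
  have hDeq : α * (Q1 + b * Q0) = P1 + b * P0 := by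
    linear_combination hEk
  have hdet : P0 * Q1 - P1 * Q0 = (-1:ℝ)^(k+1) := by
    have h := congrArg (fun z : ℤ => (z : ℝ)) (detKey α k)
    push_cast at h
    exact h
  have hE : (α * Q1 - P1) * (Q1 + b * Q0) = b * (-1:ℝ)^(k+1) := by
    linear_combination Q1 * hDeq + b * hdet
  have habs : |α * Q1 - P1| * (Q1 + b * Q0) = b := by
    have : |(α * Q1 - P1) * (Q1 + b * Q0)| = |b * (-1:ℝ)^(k+1)| := by rw [hE]
    rw [abs_mul, abs_mul, abs_pow, abs_neg, abs_one, one_pow, mul_one,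
      abs_of_pos hD, abs_of_pos hb] at this
    exact this
  -- b * Q2 ≤ D
  have ha : (cfA α (k+2) : ℝ) ≤ b⁻¹ := cfA_le hα hirr (k+1)
  have hQ2 : (cfQ α (k+2) : ℝ) = (cfA α (k+2) : ℝ) * Q1 + Q0 := by
    show ((denomRec (cfA α) (k+2) : ℕ) : ℝ) = _
    rw [show denomRec (cfA α) (k+2) = cfA α (k+2) * denomRec (cfA α) (k+1) + denomRec (cfA α) k from rfl]
    push_cast; rfl
  have hab : (cfA α (k+2) : ℝ) * b ≤ 1 := by
    have := mul_le_mul_of_nonneg_right ha (le_of_lt hb)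
    rwa [inv_mul_cancel₀ (ne_of_gt hb)] at this
  have hbQ2 : b * (cfQ α (k+2) : ℝ) ≤ Q1 + b * Q0 := by
    rw [hQ2]
    nlinarith
  have hQ2pos : (0:ℝ) < (cfQ α (k+2) : ℝ) := by
    exact_mod_cast cfQ_pos hα hirr (k+2)
  have hEeq : |α * Q1 - P1| = b / (Q1 + b * Q0) := by
    rw [eq_div_iff (ne_of_gt hD)]
    exact habs
  rw [hEeq, div_le_div_iff₀ hD hQ2pos]
  linarith [hbQ2]

lemma coprimeKey (α : ℝ) (k : ℕ) :
    IsCoprime ((numRec (cfA α) (k+1) : ℤ)) ((cfQ α (k+1) : ℤ)) := by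
  have h := detKey α k
  rcases Nat.even_or_odd (k+1) with he | ho
  · refine ⟨-(cfQ α k : ℤ), (numRec (cfA α) k : ℤ), ?_⟩
    rw [Even.neg_one_pow he] at h
    linarith
  · refine ⟨(cfQ α k : ℤ), -(numRec (cfA α) k : ℤ), ?_⟩
    rw [Odd.neg_one_pow ho] at h
    linarith


lemma keyApprox (hα : α ∈ Set.Ioo (0:ℝ) 1) (hirr : Irrational α) (n : ℕ) (hn : 1 ≤ n) :
    ∃ p : ℤ, ∃ Q' : ℕ, IsCoprime p ((cfQ α n : ℤ)) ∧ cfQ α n + 1 ≤ Q' ∧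
      |α - p / (cfQ α n : ℝ)| ≤ 1 / ((cfQ α n : ℝ) * (Q' : ℝ)) := by
  obtain ⟨k, rfl⟩ : ∃ k, n = k + 1 := ⟨n - 1, by omega⟩
  refine ⟨(numRec (cfA α) (k+1) : ℤ), cfQ α (k+2), coprimeKey α k, cfQ_succ_ge hα hirr k, ?_⟩
  have hq : (0:ℝ) < (cfQ α (k+1) : ℝ) := by exact_mod_cast cfQ_pos hα hirr (k+1)
  have hQ' : (0:ℝ) < (cfQ α (k+2) : ℝ) := by exact_mod_cast cfQ_pos hα hirr (k+2)
  have h := approxKey hα hirr k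
  have heq : α - ((numRec (cfA α) (k+1) : ℤ) : ℝ) / (cfQ α (k+1) : ℝ)
      = (α * (cfQ α (k+1) : ℝ) - (numRec (cfA α) (k+1) : ℝ)) / (cfQ α (k+1) : ℝ) := by
    push_cast
    field_simp
  rw [heq, abs_div, abs_of_pos hq, div_le_div_iff₀ hq (by positivity)]
  calc |α * (cfQ α (k+1) : ℝ) - (numRec (cfA α) (k+1) : ℝ)| * ((cfQ α (k+1) : ℝ) * (cfQ α (k+2) : ℝ))
      ≤ (1 / (cfQ α (k+2) : ℝ)) * ((cfQ α (k+1) : ℝ) * (cfQ α (k+2) : ℝ)) := by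
        apply mul_le_mul_of_nonneg_right h (by positivity)
    _ = 1 * (cfQ α (k+1) : ℝ) := by field_simp


lemma birkhoffF_val (y : ℝ) : birkhoffF y = 1 ∨ birkhoffF y = -1 := by
  unfold birkhoffF; split <;> simp

lemma birkhoffF_add_int (y : ℝ) (m : ℤ) : birkhoffF (y + m) = birkhoffF y := by
  unfold birkhoffF; rw [Int.fract_add_intCast]

lemma birkhoffF_of_mem (u : ℝ) (h0 : 0 ≤ u) (h1 : u < 1) :
    birkhoffF u = if u ≤ 1/2 then 1 else -1 := by
  unfold birkhoffF; rw [Int.fract_eq_self.mpr ⟨h0, h1⟩]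

set_option maxHeartbeats 2000000 in
lemma mainBound (q Q' : ℕ) (p : ℤ) (hq : 1 ≤ q) (hQ' : q + 1 ≤ Q')
    (hcop : IsCoprime p ((q : ℤ))) (α x : ℝ)
    (happrox : |α - (p : ℝ) / q| ≤ 1 / ((q : ℝ) * Q'))
    (hirr : Irrational α) :
    |birkhoffS α x q| ≤ 3 := by
  have hqR : (1:ℝ) ≤ (q:ℝ) := by exact_mod_cast hq
  have hqpos : (0:ℝ) < (q:ℝ) := by linarith
  have hQR : (q:ℝ) + 1 ≤ (Q':ℝ) := by exact_mod_cast hQ'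
  have hQpos : (0:ℝ) < (Q':ℝ) := by linarith
  set δ : ℝ := α - (p:ℝ) / q with hδdef
  have hδne : δ ≠ 0 := by
    intro h
    apply hirr
    refine ⟨(p:ℚ)/(q:ℚ), ?_⟩
    have : α = (p:ℝ)/(q:ℝ) := by
      have : α - (p:ℝ)/q = 0 := h
      linarith
    rw [this]; push_cast; ring
  set ε : ℝ := 1 / ((q:ℝ) + 1) with hεdef
  have hε2 : ε ≤ 1/2 := by
    rw [hεdef, div_le_div_iff₀ (by linarith) (by norm_num)]
    linarith
  have hεq : ε < 1/(q:ℝ) := by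
    rw [hεdef, div_lt_div_iff₀ (by linarith) hqpos]
    linarith
  have hεpos : 0 < ε := by positivity
  have hQε : 1/(Q':ℝ) ≤ ε := by
    rw [hεdef, div_le_div_iff₀ hQpos (by linarith)]
    linarith
  set u : ℕ → ℝ := fun j => Int.fract (x + j * ((p:ℝ)/q)) with hudef
  set m : ℕ → ℤ := fun j => ⌊x + j * ((p:ℝ)/q)⌋ with hmdef
  have hum : ∀ j : ℕ, x + j * ((p:ℝ)/q) = u j + m j := by
    intro j
    simp only [hudef, hmdef, Int.fract]
    ring
  have hu0 : ∀ j, 0 ≤ u j := fun j => Int.fract_nonneg _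
  have hu1 : ∀ j, u j < 1 := fun j => Int.fract_lt_one _
  set s : ℕ → ℝ := fun j => (j:ℝ) * δ with hsdef
  have hsbd : ∀ j, j < q → |s j| < 1 / (Q':ℝ) := by
    intro j hj
    have h1 : |s j| = (j:ℝ) * |δ| := by
      rw [hsdef]; simp [abs_mul]
    have hj' : (j:ℝ) ≤ (q:ℝ) - 1 := by
      have : (j:ℝ) + 1 ≤ (q:ℝ) := by exact_mod_cast hj
      linarith
    have h2 : (j:ℝ) * |δ| ≤ ((q:ℝ) - 1) * (1/((q:ℝ)*Q')) := by
      apply mul_le_mul hj' happrox (abs_nonneg _) (by linarith)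
    have h3 : ((q:ℝ) - 1) * (1/((q:ℝ)*Q')) < 1/(Q':ℝ) := by
      rw [show ((q:ℝ) - 1) * (1/((q:ℝ)*Q')) = ((q:ℝ)-1)/((q:ℝ)*Q') from by ring,
        div_lt_div_iff₀ (by positivity) hQpos]
      nlinarith
    linarith [h1 ▸ h2]
  have hsε : ∀ j, j < q → |s j| < ε := fun j hj => lt_of_lt_of_le (hsbd j hj) hQε
  have hf1 : ∀ j : ℕ, birkhoffF (x + (j:ℝ) * α) = birkhoffF (u j + s j) := by
    intro j
    have hxa : x + (j:ℝ)*α = (u j + s j) + (m j : ℝ) := by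
      have h := hum j
      simp only [hsdef, hδdef]
      linarith [h]
    rw [hxa, birkhoffF_add_int]
  have hfu : ∀ j, birkhoffF (u j) = if u j ≤ 1/2 then 1 else -1 :=
    fun j => birkhoffF_of_mem _ (hu0 j) (hu1 j)
  -- separation
  have hz : ∀ j : ℕ, (q:ℝ) * u j = (q:ℝ)*x + (((j:ℤ)*p - (q:ℤ) * m j : ℤ) : ℝ) := by
    intro j
    have h := hum j
    have hq0 : (q:ℝ) ≠ 0 := ne_of_gt hqpos
    push_cast
    have : u j = x + (j:ℝ) * ((p:ℝ)/q) - (m j : ℝ) := by linarith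
    rw [this]
    field_simp
    ring
  have hsep : ∀ j, j < q → ∀ j', j' < q → j ≠ j' → 1/(q:ℝ) ≤ |u j - u j'| := by
    intro j hj j' hj' hne
    set z : ℤ := ((j:ℤ)*p - (q:ℤ) * m j) - ((j':ℤ)*p - (q:ℤ) * m j') with hzdef
    have hzr : (q:ℝ) * (u j - u j') = (z:ℝ) := by
      have h1 := hz j
      have h2 := hz j'
      rw [hzdef]
      push_cast at h1 h2 ⊢
      linarith
    have hz0 : z ≠ 0 := by
      intro h0
      have heq : ((j:ℤ) - j')*p = (q:ℤ) * (m j - m j') := by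
        rw [hzdef] at h0
        ring_nf at h0 ⊢
        omega
      have hdvd : (q:ℤ) ∣ ((j:ℤ) - j') * p := ⟨m j - m j', heq⟩
      have hdvd2 : (q:ℤ) ∣ ((j:ℤ) - j') := (hcop.symm).dvd_of_dvd_mul_right hdvd
      rcases hdvd2 with ⟨t, ht⟩
      have hj1 : (j:ℤ) < q := by exact_mod_cast hj
      have hj2 : (j':ℤ) < q := by exact_mod_cast hj'
      have hjne : (j:ℤ) ≠ (j':ℤ) := by exact_mod_cast hne
      have hq1 : (1:ℤ) ≤ q := by exact_mod_cast hq
      rcases lt_trichotomy t 0 with h | h | h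
      · nlinarith [Int.natCast_nonneg j, Int.natCast_nonneg j']
      · rw [h, mul_zero] at ht; omega
      · nlinarith [Int.natCast_nonneg j, Int.natCast_nonneg j']
    have h1z : (1:ℝ) ≤ |(z:ℝ)| := by
      have : (1:ℤ) ≤ |z| := Int.one_le_abs hz0
      calc (1:ℝ) ≤ (|z| : ℤ) := by exact_mod_cast this
        _ = |(z:ℝ)| := by push_cast; ring
    have habs : (q:ℝ) * |u j - u j'| = |(z:ℝ)| := by
      rw [← abs_of_pos hqpos, ← abs_mul, hzr]
    rw [div_le_iff₀ hqpos]
    calc (1:ℝ) ≤ |(z:ℝ)| := h1z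
      _ = |u j - u j'| * q := by rw [← habs]; ring
  -- the fractional grid
  set φ : ℝ := Int.fract ((q:ℝ) * x) with hφdef
  have hφ0 : 0 ≤ φ := Int.fract_nonneg _
  have hφ1 : φ < 1 := Int.fract_lt_one _
  have hfr : ∀ j, Int.fract ((q:ℝ) * u j) = φ := by
    intro j
    rw [hz j, Int.fract_add_intCast]
  set K : ℕ → ℕ := fun j => (⌊(q:ℝ) * u j⌋).toNat with hKdef
  have hKval : ∀ j, u j = ((K j : ℝ) + φ)/q := by
    intro j
    have h1 : (q:ℝ) * u j = (⌊(q:ℝ)*u j⌋ : ℝ) + φ := by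
      conv_lhs => rw [← Int.floor_add_fract ((q:ℝ) * u j)]
      rw [hfr j]
    have h2 : (0:ℝ) ≤ (q:ℝ)*u j := mul_nonneg (le_of_lt hqpos) (hu0 j)
    have h3 : ((K j : ℕ) : ℝ) = (⌊(q:ℝ)*u j⌋ : ℝ) := by
      simp only [hKdef]
      exact_mod_cast Int.toNat_of_nonneg (Int.floor_nonneg.mpr h2)
    rw [eq_div_iff (ne_of_gt hqpos), h3]
    linarith [h1]
  have hKlt : ∀ j, j < q → K j < q := by
    intro j hj
    have h2 : (q:ℝ) * u j < q := by nlinarith [hu1 j]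
    have h3 : (⌊(q:ℝ)*u j⌋ : ℝ) < (q:ℝ) := lt_of_le_of_lt (Int.floor_le _) h2
    have h4 : ⌊(q:ℝ)*u j⌋ < (q:ℤ) := by exact_mod_cast h3
    simp only [hKdef]
    omega
  -- T analysis
  set g : ℕ → ℤ := fun i => birkhoffF (((i:ℝ) + φ)/q) with hgdef
  have hgu : ∀ j, birkhoffF (u j) = g (K j) := by
    intro j
    rw [hKval j]
  have hKinj : Set.InjOn K (Finset.range q) := by
    intro a ha b hb hab
    simp only [Finset.coe_range, Set.mem_Iio] at ha hb
    by_contra hne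
    have hsep' := hsep a ha b hb hne
    rw [hKval a, hKval b, hab] at hsep'
    simp at hsep'
    linarith [hsep', hqpos, one_div_pos.mpr hqpos]
  have himg : (Finset.range q).image K = Finset.range q := by
    apply Finset.eq_of_subset_of_card_le
    · intro i hi
      simp only [Finset.mem_image, Finset.mem_range] at hi ⊢
      obtain ⟨j, hj, rfl⟩ := hi
      exact hKlt j hj
    · rw [Finset.card_image_of_injOn hKinj]
  set T : ℤ := ∑ j ∈ Finset.range q, birkhoffF (u j) with hTdef
  have hTg : T = ∑ i ∈ Finset.range q, g i := by
    have h1 : ∑ i ∈ (Finset.range q).image K, g i = ∑ j ∈ Finset.range q, g (K j) :=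
      Finset.sum_image (fun a ha b hb h =>
        hKinj (Finset.mem_coe.mpr ha) (Finset.mem_coe.mpr hb) h)
    rw [himg] at h1
    rw [hTdef, h1]
    exact Finset.sum_congr rfl (fun j _ => hgu j)
  set c : ℤ := ⌊(q:ℝ)/2 - φ⌋ with hcdef
  have hgi : ∀ i ∈ Finset.range q, g i = if (i:ℤ) ≤ c then 1 else -1 := by
    intro i hi
    simp only [Finset.mem_range] at hi
    have hiq : (i:ℝ) ≤ (q:ℝ) - 1 := by
      have : (i:ℝ) + 1 ≤ (q:ℝ) := by exact_mod_cast hi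
      linarith
    have h0 : (0:ℝ) ≤ ((i:ℝ)+φ)/q := by positivity
    have h1 : ((i:ℝ)+φ)/q < 1 := by
      rw [div_lt_one hqpos]; linarith
    have hiff : (((i:ℝ)+φ)/q ≤ 1/2) ↔ ((i:ℤ) ≤ c) := by
      rw [hcdef, Int.le_floor]
      rw [div_le_div_iff₀ hqpos (by norm_num : (0:ℝ) < 2)]
      push_cast
      constructor <;> intro h <;> linarith
    simp only [hgdef]
    rw [birkhoffF_of_mem _ h0 h1]
    by_cases h : ((i:ℝ)+φ)/q ≤ 1/2
    · rw [if_pos h, if_pos (hiff.mp h)]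
    · rw [if_neg h, if_neg (fun hc => h (hiff.mpr hc))]
  set C : ℕ := ((Finset.range q).filter (fun i : ℕ => (i:ℤ) ≤ c)).card with hCdef
  have hTval : T = (C:ℤ) - ((q:ℤ) - C) := by
    rw [hTg, Finset.sum_congr rfl hgi, Finset.sum_ite, Finset.sum_const, Finset.sum_const]
    have hcards := Finset.card_filter_add_card_filter_not
      (s := Finset.range q) (p := fun i : ℕ => (i:ℤ) ≤ c)
    rw [Finset.card_range] at hcards
    rw [← hCdef]
    have : ((Finset.range q).filter (fun i : ℕ => ¬ (i:ℤ) ≤ c)).card = q - C := by omega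
    rw [this]
    simp only [nsmul_eq_mul, mul_one, mul_neg]
    have hCq : C ≤ q := by omega
    push_cast [Nat.cast_sub hCq]
    ring
  have hCq : C ≤ q := by
    rw [hCdef]
    calc ((Finset.range q).filter _).card ≤ (Finset.range q).card := Finset.card_filter_le _ _
      _ = q := Finset.card_range q
  have hc_le : (c:ℝ) ≤ (q:ℝ)/2 - φ := Int.floor_le _
  have hc_gt : (q:ℝ)/2 - φ - 1 < (c:ℝ) := Int.sub_one_lt_floor _
  have hcm1 : -1 ≤ c := by
    rw [hcdef, Int.le_floor]
    push_cast
    linarith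
  have h2cq : 2*c ≤ (q:ℤ) := by
    have : 2*(c:ℝ) ≤ (q:ℝ) := by linarith
    exact_mod_cast this
  have hCub : (C:ℤ) ≤ c + 1 := by
    have hsub : (Finset.range q).filter (fun i : ℕ => (i:ℤ) ≤ c) ⊆ Finset.range (c+1).toNat := by
      intro i hi
      simp only [Finset.mem_filter, Finset.mem_range] at hi ⊢
      omega
    have := Finset.card_le_card hsub
    rw [Finset.card_range] at this
    rw [hCdef]
    omega
  have hClb : min q (c+1).toNat ≤ C := by
    have hsub : Finset.range (min q (c+1).toNat) ⊆ (Finset.range q).filter (fun i : ℕ => (i:ℤ) ≤ c) := by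
      intro i hi
      simp only [Finset.mem_filter, Finset.mem_range] at hi ⊢
      omega
    have := Finset.card_le_card hsub
    rw [Finset.card_range] at this
    rw [hCdef]
    omega
  have hT_ub : T ≤ 2 := by rw [hTval]; omega
  have hT_lb : -1 ≤ T := by
    rw [hTval]
    rcases le_or_gt q ((c+1).toNat) with h | h
    · have : C = q := le_antisymm hCq (by omega)
      omega
    · have hCge : (c+1).toNat ≤ C := by omega
      have : (q:ℝ) - 4 < 2*(c:ℝ) := by linarith
      have h4 : (q:ℤ) - 4 < 2*c := by exact_mod_cast this
      omega
  have hT2 : T = 2 → φ = 0 ∧ q % 2 = 0 := by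
    intro hT2'
    rw [hTval] at hT2'
    have h2C : 2*(C:ℤ) = q + 2 := by omega
    have hq2c : (q:ℤ) ≤ 2*c := by omega
    have : (q:ℝ) ≤ 2*(c:ℝ) := by exact_mod_cast hq2c
    constructor
    · linarith
    · omega
  -- the perturbation part
  set D : ℕ → ℤ := fun j => birkhoffF (u j + s j) - birkhoffF (u j) with hDdef
  have hST : birkhoffS α x q = T + ∑ j ∈ Finset.range q, D j := by
    rw [hTdef, ← Finset.sum_add_distrib]
    unfold birkhoffS
    apply Finset.sum_congr rfl
    intro j _
    rw [hf1 j, hDdef]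
    ring
  have hDval : ∀ j, D j = 2 ∨ D j = 0 ∨ D j = -2 := by
    intro j
    rw [hDdef]
    rcases birkhoffF_val (u j + s j) with h | h <;> rcases birkhoffF_val (u j) with h' | h' <;>
      simp only [h, h'] <;> norm_num
  have hKub : ∀ j, j < q → φ = 0 → u j ≤ 1 - 1/(q:ℝ) ∧ (q:ℝ) * u j = (K j : ℝ) := by
    intro j hj hphi
    have h1 : u j = (K j : ℝ)/q := by rw [hKval j, hphi, add_zero]
    have h2 : (K j : ℝ) ≤ (q:ℝ) - 1 := by
      have : (K j : ℝ) + 1 ≤ (q:ℝ) := by exact_mod_cast hKlt j hj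
      linarith
    constructor
    · rw [h1]
      rw [div_le_iff₀ hqpos]
      have : (1 - 1/(q:ℝ)) * q = q - 1 := by field_simp
      rw [this]; exact h2
    · rw [h1]; field_simp
  -- case on the sign of δ
  have hmain : (∑ j ∈ Finset.range q, D j ≤ 2) ∧ (-2 ≤ ∑ j ∈ Finset.range q, D j) ∧
      (φ = 0 ∧ q % 2 = 0 → ∑ j ∈ Finset.range q, D j ≤ 0) := by
    rcases lt_or_gt_of_ne hδne with hneg | hpos
    · -- δ < 0
      have hs0 : ∀ j, j < q → s j ≤ 0 := by
        intro j hj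
        rw [hsdef]
        apply mul_nonpos_of_nonneg_of_nonpos (Nat.cast_nonneg j) (le_of_lt hneg)
      have hsgt : ∀ j, j < q → -ε < s j := by
        intro j hj
        have := hsε j hj
        rw [abs_lt] at this
        linarith [this.1]
      set A := (Finset.range q).filter (fun j => 1/2 < u j ∧ u j < 1/2 + ε) with hA
      set B := (Finset.range q).filter (fun j => u j < ε) with hB
      have hDub : ∀ j ∈ Finset.range q, D j ≤ if j ∈ A then 2 else 0 := by
        intro j hj
        simp only [Finset.mem_range] at hj
        by_cases hjA : j ∈ A
        · rw [if_pos hjA]; rcases hDval j with h|h|h <;> omega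
        · rw [if_neg hjA]
          rcases hDval j with h|h|h
          · exfalso
            rw [hDdef] at h
            simp only at h
            have hfu2 : birkhoffF (u j + s j) = 1 ∧ birkhoffF (u j) = -1 := by
              rcases birkhoffF_val (u j + s j) with h1|h1 <;>
                rcases birkhoffF_val (u j) with h2|h2 <;> rw [h1, h2] at h <;> omega
            have hugt : 1/2 < u j := by
              by_contra hle
              rw [hfu j, if_pos (not_lt.mp hle)] at hfu2
              omega
            have h0' : 0 ≤ u j + s j := by
              have := hsgt j hj
              linarith [hε2]
            have h1' : u j + s j < 1 := by linarith [hu1 j, hs0 j hj]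
            have hle2 : u j + s j ≤ 1/2 := by
              by_contra hgt
              rw [birkhoffF_of_mem _ h0' h1', if_neg hgt] at hfu2
              omega
            have : u j < 1/2 + ε := by linarith [hsgt j hj]
            exact hjA (by simp only [hA, Finset.mem_filter, Finset.mem_range]; exact ⟨hj, hugt, this⟩)
          · omega
          · omega
      have hDlb : ∀ j ∈ Finset.range q, (if j ∈ B then (-2:ℤ) else 0) ≤ D j := by
        intro j hj
        simp only [Finset.mem_range] at hj
        by_cases hjB : j ∈ B
        · rw [if_pos hjB]; rcases hDval j with h|h|h <;> omega
        · rw [if_neg hjB]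
          rcases hDval j with h|h|h
          · omega
          · omega
          · exfalso
            rw [hDdef] at h
            simp only at h
            have hfu2 : birkhoffF (u j + s j) = -1 ∧ birkhoffF (u j) = 1 := by
              rcases birkhoffF_val (u j + s j) with h1|h1 <;>
                rcases birkhoffF_val (u j) with h2|h2 <;> rw [h1, h2] at h <;> omega
            have hule : u j ≤ 1/2 := by
              by_contra hgt
              rw [hfu j, if_neg hgt] at hfu2
              omega
            have hneg' : u j + s j < 0 := by
              by_contra hge
              push_neg at hge
              have h1' : u j + s j < 1 := by linarith [hu1 j, hs0 j hj]
              have : u j + s j ≤ 1/2 := by linarith [hs0 j hj]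
              rw [birkhoffF_of_mem _ hge h1', if_pos this] at hfu2
              omega
            have : u j < ε := by linarith [hsgt j hj]
            exact hjB (by simp only [hB, Finset.mem_filter, Finset.mem_range]; exact ⟨hj, this⟩)
      have hAcard : A.card ≤ 1 := by
        rw [Finset.card_le_one]
        intro a ha b hb
        simp only [hA, Finset.mem_filter, Finset.mem_range] at ha hb
        by_contra hne
        have := hsep a ha.1 b hb.1 hne
        have : |u a - u b| < ε := by
          rw [abs_lt]
          constructor <;> [linarith [ha.2.1, ha.2.2, hb.2.1, hb.2.2]; linarith [ha.2.1, ha.2.2, hb.2.1, hb.2.2]]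
        linarith [hsep a ha.1 b hb.1 hne, hεq]
      have hBcard : B.card ≤ 1 := by
        rw [Finset.card_le_one]
        intro a ha b hb
        simp only [hB, Finset.mem_filter, Finset.mem_range] at ha hb
        by_contra hne
        have h1 : |u a - u b| < ε := by
          rw [abs_lt]
          constructor <;> [linarith [ha.2, hb.2, hu0 a, hu0 b]; linarith [ha.2, hb.2, hu0 a, hu0 b]]
        linarith [hsep a ha.1 b hb.1 hne, hεq]
      refine ⟨?_, ?_, ?_⟩
      · calc ∑ j ∈ Finset.range q, D j ≤ ∑ j ∈ Finset.range q, (if j ∈ A then (2:ℤ) else 0) :=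
            Finset.sum_le_sum hDub
          _ = ∑ j ∈ Finset.range q ∩ A, (2:ℤ) := by rw [Finset.sum_ite_mem]
          _ = 2 * (A.card : ℤ) := by
            rw [Finset.inter_eq_right.mpr (Finset.filter_subset _ _), Finset.sum_const]
            push_cast; ring
          _ ≤ 2 := by
            have : (A.card : ℤ) ≤ 1 := by exact_mod_cast hAcard
            linarith
      · calc (-2:ℤ) ≤ -2 * (B.card : ℤ) := by have h := hBcard; omega
          _ = ∑ j ∈ Finset.range q ∩ B, (-2:ℤ) := by
            rw [Finset.inter_eq_right.mpr (Finset.filter_subset _ _), Finset.sum_const]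
            push_cast; ring
          _ = ∑ j ∈ Finset.range q, (if j ∈ B then (-2:ℤ) else 0) := by rw [Finset.sum_ite_mem]
          _ ≤ ∑ j ∈ Finset.range q, D j := Finset.sum_le_sum hDlb
      · rintro ⟨hphi, heven⟩
        have hAempty : A = ∅ := by
          rw [Finset.eq_empty_iff_forall_notMem]
          intro j hjA
          simp only [hA, Finset.mem_filter, Finset.mem_range] at hjA
          obtain ⟨hjq, hju1, hju2⟩ := hjA
          obtain ⟨hub, hqu⟩ := hKub j hjq hphi
          -- u j = K j / q ∈ (1/2, 1/2 + ε) : impossible since q even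
          have h2K : (q:ℝ) < 2 * (K j : ℝ) := by nlinarith
          have h2K' : (q:ℤ) < 2 * (K j : ℤ) := by exact_mod_cast h2K
          have h2K2 : (q:ℤ) + 2 ≤ 2 * (K j : ℤ) := by omega
          have : (q:ℝ) + 2 ≤ 2 * (K j : ℝ) := by exact_mod_cast h2K2
          -- so u j ≥ 1/2 + 1/q > 1/2 + ε
          have hular : 1/2 + 1/(q:ℝ) ≤ u j := by
            rw [div_add_div _ _ (by norm_num : (2:ℝ) ≠ 0) (ne_of_gt hqpos)]
            rw [div_le_iff₀ (by positivity)]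
            nlinarith
          linarith
        calc ∑ j ∈ Finset.range q, D j ≤ ∑ j ∈ Finset.range q, (if j ∈ A then (2:ℤ) else 0) :=
            Finset.sum_le_sum hDub
          _ = ∑ j ∈ Finset.range q ∩ A, (2:ℤ) := by rw [Finset.sum_ite_mem]
          _ = 0 := by rw [hAempty]; simp
    · -- δ > 0
      have hs0 : ∀ j, j < q → 0 ≤ s j := by
        intro j hj
        exact mul_nonneg (Nat.cast_nonneg j) (le_of_lt hpos)
      have hslt : ∀ j, j < q → s j < ε := by
        intro j hj
        have := hsε j hj
        rw [abs_lt] at this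
        exact this.2
      set A := (Finset.range q).filter (fun j => 1 - ε ≤ u j) with hA
      set B := (Finset.range q).filter (fun j => 1/2 - ε < u j ∧ u j ≤ 1/2) with hB
      have hDub : ∀ j ∈ Finset.range q, D j ≤ if j ∈ A then 2 else 0 := by
        intro j hj
        simp only [Finset.mem_range] at hj
        by_cases hjA : j ∈ A
        · rw [if_pos hjA]; rcases hDval j with h|h|h <;> omega
        · rw [if_neg hjA]
          rcases hDval j with h|h|h
          · exfalso
            rw [hDdef] at h
            simp only at h
            have hfu2 : birkhoffF (u j + s j) = 1 ∧ birkhoffF (u j) = -1 := by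
              rcases birkhoffF_val (u j + s j) with h1|h1 <;>
                rcases birkhoffF_val (u j) with h2|h2 <;> rw [h1, h2] at h <;> omega
            have hugt : 1/2 < u j := by
              by_contra hle
              rw [hfu j, if_pos (not_lt.mp hle)] at hfu2
              omega
            -- u + s < 1 (since u < 1 - ε as j ∉ A, s < ε), so fract = u + s > 1/2 → f = -1 contra
            have hult : u j < 1 - ε := by
              by_contra hge
              exact hjA (by simp only [hA, Finset.mem_filter, Finset.mem_range]; exact ⟨hj, not_lt.mp hge⟩)
            have h0' : 0 ≤ u j + s j := by linarith [hu0 j, hs0 j hj]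
            have h1' : u j + s j < 1 := by linarith [hslt j hj]
            have : ¬ (u j + s j ≤ 1/2) := by push_neg; linarith [hs0 j hj]
            rw [birkhoffF_of_mem _ h0' h1', if_neg this] at hfu2
            omega
          · omega
          · omega
      have hDlb : ∀ j ∈ Finset.range q, (if j ∈ B then (-2:ℤ) else 0) ≤ D j := by
        intro j hj
        simp only [Finset.mem_range] at hj
        by_cases hjB : j ∈ B
        · rw [if_pos hjB]; rcases hDval j with h|h|h <;> omega
        · rw [if_neg hjB]
          rcases hDval j with h|h|h
          · omega
          · omega
          · exfalso
            rw [hDdef] at h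
            simp only at h
            have hfu2 : birkhoffF (u j + s j) = -1 ∧ birkhoffF (u j) = 1 := by
              rcases birkhoffF_val (u j + s j) with h1|h1 <;>
                rcases birkhoffF_val (u j) with h2|h2 <;> rw [h1, h2] at h <;> omega
            have hule : u j ≤ 1/2 := by
              by_contra hgt
              rw [hfu j, if_neg hgt] at hfu2
              omega
            have h0' : 0 ≤ u j + s j := by linarith [hu0 j, hs0 j hj]
            have h1' : u j + s j < 1 := by linarith [hslt j hj, hε2]
            have hgt2 : 1/2 < u j + s j := by
              by_contra hle
              push_neg at hle
              rw [birkhoffF_of_mem _ h0' h1', if_pos hle] at hfu2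
              omega
            have : 1/2 - ε < u j := by linarith [hslt j hj]
            exact hjB (by simp only [hB, Finset.mem_filter, Finset.mem_range]; exact ⟨hj, this, hule⟩)
      have hAcard : A.card ≤ 1 := by
        rw [Finset.card_le_one]
        intro a ha b hb
        simp only [hA, Finset.mem_filter, Finset.mem_range] at ha hb
        by_contra hne
        have h1 : |u a - u b| < ε := by
          rw [abs_lt]
          constructor <;> [linarith [ha.2, hb.2, hu1 a, hu1 b]; linarith [ha.2, hb.2, hu1 a, hu1 b]]
        linarith [hsep a ha.1 b hb.1 hne, hεq]
      have hBcard : B.card ≤ 1 := by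
        rw [Finset.card_le_one]
        intro a ha b hb
        simp only [hB, Finset.mem_filter, Finset.mem_range] at ha hb
        by_contra hne
        have h1 : |u a - u b| < ε := by
          rw [abs_lt]
          constructor <;> [linarith [ha.2.1, ha.2.2, hb.2.1, hb.2.2]; linarith [ha.2.1, ha.2.2, hb.2.1, hb.2.2]]
        linarith [hsep a ha.1 b hb.1 hne, hεq]
      refine ⟨?_, ?_, ?_⟩
      · calc ∑ j ∈ Finset.range q, D j ≤ ∑ j ∈ Finset.range q, (if j ∈ A then (2:ℤ) else 0) :=
            Finset.sum_le_sum hDub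
          _ = ∑ j ∈ Finset.range q ∩ A, (2:ℤ) := by rw [Finset.sum_ite_mem]
          _ = 2 * (A.card : ℤ) := by
            rw [Finset.inter_eq_right.mpr (Finset.filter_subset _ _), Finset.sum_const]
            push_cast; ring
          _ ≤ 2 := by
            have : (A.card : ℤ) ≤ 1 := by exact_mod_cast hAcard
            linarith
      · calc (-2:ℤ) ≤ -2 * (B.card : ℤ) := by have h := hBcard; omega
          _ = ∑ j ∈ Finset.range q ∩ B, (-2:ℤ) := by
            rw [Finset.inter_eq_right.mpr (Finset.filter_subset _ _), Finset.sum_const]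
            push_cast; ring
          _ = ∑ j ∈ Finset.range q, (if j ∈ B then (-2:ℤ) else 0) := by rw [Finset.sum_ite_mem]
          _ ≤ ∑ j ∈ Finset.range q, D j := Finset.sum_le_sum hDlb
      · rintro ⟨hphi, _⟩
        have hAempty : A = ∅ := by
          rw [Finset.eq_empty_iff_forall_notMem]
          intro j hjA
          simp only [hA, Finset.mem_filter, Finset.mem_range] at hjA
          obtain ⟨hjq, hju⟩ := hjA
          obtain ⟨hub, _⟩ := hKub j hjq hphi
          linarith [hεq]
        calc ∑ j ∈ Finset.range q, D j ≤ ∑ j ∈ Finset.range q, (if j ∈ A then (2:ℤ) else 0) :=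
            Finset.sum_le_sum hDub
          _ = ∑ j ∈ Finset.range q ∩ A, (2:ℤ) := by rw [Finset.sum_ite_mem]
          _ = 0 := by rw [hAempty]; simp
  obtain ⟨hub, hlb, href⟩ := hmain
  rw [abs_le]
  constructor
  · rw [hST]; linarith [hT_lb]
  · rw [hST]
    rcases eq_or_lt_of_le hT_ub with hTeq | hTlt
    · have := href (hT2 hTeq)
      linarith
    · linarith

end Stmt8Aux


/-- For every irrational α ∈ (0,1), x ∈ [0,1) and n ≥ 1,
    |S_{q_n}(α,x)| ≤ 3. -/
theorem stmt8 (α : ℝ) (hα : α ∈ Set.Ioo (0 : ℝ) 1) (hirr : Irrational α)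
    (x : ℝ) (hx : x ∈ Set.Ico (0 : ℝ) 1) (n : ℕ) (hn : 1 ≤ n) :
    |birkhoffS α x (cfQ α n)| ≤ 3 := by
  obtain ⟨p, Q', hcop, hQ', happrox⟩ := Stmt8Aux.keyApprox hα hirr n hn
  exact Stmt8Aux.mainBound (cfQ α n) Q' p (Stmt8Aux.cfQ_pos hα hirr n) hQ' hcop α x happrox hirr
end

section
/- Let (a_i) and (b_i) be sequences of positive integers, let α ∈ (0,1) be the irrational whose continued fraction expansion is [2a_1, b_1, 2a_2, b_2, …], and suppose there is ε > 0 such that a_n > ε·A_{n−1} for all n ≥ 2, where A_n = a_1 + ⋯ + a_n. Then there is a constant C < ∞ such that for every n ≥ 1 and every integer t, the number of times 1 ≤ i ≤ q_{2n} with S_i(α, α) = t is at most C·q_{2n}/A_n. -/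
open MeasureTheory Filter
open scoped ENNReal

namespace Stmt12Aux


noncomputable def tIt (α : ℝ) (k : ℕ) : ℝ := gaussMap^[k] α
noncomputable def betaP (α : ℝ) (k : ℕ) : ℝ := ∏ j ∈ Finset.range (k + 1), tIt α j
def numerRec (c : ℕ → ℕ) : ℕ → ℕ
  | 0 => 0
  | 1 => 1
  | n + 2 => c (n + 2) * numerRec c (n + 1) + numerRec c n

variable {α : ℝ}

lemma tIt_succ (k : ℕ) : tIt α (k + 1) = Int.fract (tIt α k)⁻¹ := by
  simp [tIt, Function.iterate_succ_apply', gaussMap]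

lemma tIt_irr_mem (hirr : Irrational α) (hmem : α ∈ Set.Ioo (0:ℝ) 1) :
    ∀ k, Irrational (tIt α k) ∧ tIt α k ∈ Set.Ioo (0:ℝ) 1 := by
  intro k
  induction k with
  | zero => exact ⟨hirr, hmem⟩
  | succ n ih =>
    obtain ⟨h1, h2⟩ := ih
    have hinv : Irrational (tIt α n)⁻¹ := h1.inv
    have hfr : Irrational (Int.fract (tIt α n)⁻¹) := by
      rw [Int.fract]; exact hinv.sub_intCast _
    rw [tIt_succ]
    refine ⟨hfr, ?_, Int.fract_lt_one _⟩
    rcases eq_or_lt_of_le (Int.fract_nonneg (tIt α n)⁻¹) with h | h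
    · exact absurd h.symm (by simpa using hfr.ne_int 0)
    · exact h

lemma cfA_succ_eq (k : ℕ) : cfA α (k + 1) = ⌊(tIt α k)⁻¹⌋₊ := by
  simp [cfA, tIt]

lemma tIt_inv_eq (hirr : Irrational α) (hmem : α ∈ Set.Ioo (0:ℝ) 1) (k : ℕ) :
    (tIt α k)⁻¹ = (cfA α (k + 1) : ℝ) + tIt α (k + 1) := by
  have h2 := (tIt_irr_mem hirr hmem k).2
  have hpos : (0:ℝ) < (tIt α k)⁻¹ := inv_pos.2 h2.1
  rw [cfA_succ_eq, tIt_succ, Int.fract]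
  have : ((⌊(tIt α k)⁻¹⌋₊ : ℕ) : ℝ) = ((⌊(tIt α k)⁻¹⌋ : ℤ) : ℝ) := by
    exact_mod_cast congrArg (fun z : ℤ => (z : ℝ)) (Int.natCast_floor_eq_floor hpos.le)
  rw [this]; ring

lemma one_le_cfA_succ (hirr : Irrational α) (hmem : α ∈ Set.Ioo (0:ℝ) 1) (k : ℕ) :
    1 ≤ cfA α (k + 1) := by
  have h2 := (tIt_irr_mem hirr hmem k).2
  have : (1:ℝ) < (tIt α k)⁻¹ := by
    rw [lt_inv_comm₀ (by norm_num) h2.1]; simpa using h2.2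
  rw [cfA_succ_eq]
  exact Nat.le_floor (by exact_mod_cast this.le)

lemma betaP_succ (k : ℕ) : betaP α (k + 1) = betaP α k * tIt α (k + 1) :=
  Finset.prod_range_succ _ _

lemma betaP_zero : betaP α 0 = α := by simp [betaP, tIt]

lemma betaP_pos (hirr : Irrational α) (hmem : α ∈ Set.Ioo (0:ℝ) 1) (k : ℕ) :
    0 < betaP α k := by
  induction k with
  | zero => rw [betaP_zero]; exact hmem.1
  | succ n ih => rw [betaP_succ]; exact mul_pos ih (tIt_irr_mem hirr hmem (n+1)).2.1



variable {α : ℝ} {c : ℕ → ℕ}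

-- hypotheses packaged
structure CFHyp (α : ℝ) (c : ℕ → ℕ) : Prop where
  tpos : ∀ k, 0 < tIt α k
  tlt : ∀ k, tIt α k < 1
  inv_eq : ∀ k, (tIt α k)⁻¹ = (c (k + 1) : ℝ) + tIt α (k + 1)
  cpos : ∀ k, 1 ≤ c (k + 1)

namespace CFHyp

variable (h : CFHyp α c)

lemma betaP_succ' (k : ℕ) : betaP α (k + 1) = betaP α k * tIt α (k + 1) :=
  Finset.prod_range_succ _ _

lemma betaP_zero' : betaP α 0 = α := by simp [betaP, tIt]

include h

lemma beta_pos : ∀ k, 0 < betaP α k := by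
  intro k; induction k with
  | zero => rw [betaP_zero']; simpa [tIt] using h.tpos 0
  | succ n ih => rw [betaP_succ']; exact mul_pos ih (h.tpos (n+1))

lemma beta_rec (k : ℕ) :
    betaP α (k + 2) = betaP α k - (c (k + 2) : ℝ) * betaP α (k + 1) := by
  have ht := h.tpos (k + 1)
  have hinv := h.inv_eq (k + 1)
  have h1 : betaP α (k + 2) = betaP α (k+1) * tIt α (k+2) := betaP_succ' _
  have h2 : betaP α (k + 1) = betaP α k * tIt α (k+1) := betaP_succ' _
  have h3 : tIt α (k+2) = (tIt α (k+1))⁻¹ - (c (k+2) : ℝ) := by rw [hinv]; ring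
  rw [h1, h3, h2]
  field_simp

lemma qp_alpha : ∀ k,
    (denomRec c k : ℝ) * α - (numerRec c k : ℝ) = (-1 : ℝ)^k * betaP α k := by
  have base0 : (denomRec c 0 : ℝ) * α - (numerRec c 0 : ℝ) = (-1:ℝ)^0 * betaP α 0 := by
    simp [denomRec, numerRec, betaP_zero']
  have base1 : (denomRec c 1 : ℝ) * α - (numerRec c 1 : ℝ) = (-1:ℝ)^1 * betaP α 1 := by
    have hinv := h.inv_eq 0
    have ht0 : tIt α 0 = α := by simp [tIt]
    have hα : 0 < α := by rw [← ht0]; exact h.tpos 0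
    rw [ht0] at hinv
    have key : α * ((c 1 : ℝ) + tIt α 1) = 1 := by
      rw [← hinv, mul_inv_cancel₀ hα.ne']
    simp only [denomRec, numerRec, Nat.cast_one, pow_one, betaP_succ', betaP_zero']
    nlinarith [key]
  have step : ∀ k, (denomRec c k : ℝ) * α - (numerRec c k : ℝ) = (-1:ℝ)^k * betaP α k →
      (denomRec c (k+1) : ℝ) * α - (numerRec c (k+1) : ℝ) = (-1:ℝ)^(k+1) * betaP α (k+1) →
      (denomRec c (k+2) : ℝ) * α - (numerRec c (k+2) : ℝ) = (-1:ℝ)^(k+2) * betaP α (k+2) := by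
    intro k ih1 ih2
    have hq : (denomRec c (k+2) : ℝ) = (c (k+2) : ℝ) * (denomRec c (k+1) : ℝ) + (denomRec c k : ℝ) := by
      push_cast [denomRec]; ring
    have hp : (numerRec c (k+2) : ℝ) = (c (k+2) : ℝ) * (numerRec c (k+1) : ℝ) + (numerRec c k : ℝ) := by
      push_cast [numerRec]; ring
    have hb := h.beta_rec k
    rw [hq, hp]
    have : (c (k+2) : ℝ) * ((denomRec c (k+1) : ℝ) * α - (numerRec c (k+1) : ℝ))
        + ((denomRec c k : ℝ) * α - (numerRec c k : ℝ))
        = (c (k+2):ℝ) * ((-1:ℝ)^(k+1) * betaP α (k+1)) + (-1:ℝ)^k * betaP α k := by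
      rw [ih1, ih2]
    calc ((c (k+2):ℝ) * (denomRec c (k+1):ℝ) + (denomRec c k : ℝ)) * α
          - ((c (k+2):ℝ) * (numerRec c (k+1):ℝ) + (numerRec c k : ℝ))
        = (c (k+2) : ℝ) * ((denomRec c (k+1) : ℝ) * α - (numerRec c (k+1) : ℝ))
          + ((denomRec c k : ℝ) * α - (numerRec c k : ℝ)) := by ring
      _ = (c (k+2):ℝ) * ((-1:ℝ)^(k+1) * betaP α (k+1)) + (-1:ℝ)^k * betaP α k := this
      _ = (-1:ℝ)^(k+2) * (betaP α k - (c (k+2):ℝ) * betaP α (k+1)) := by ring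
      _ = (-1:ℝ)^(k+2) * betaP α (k+2) := by rw [hb]
  intro k
  induction k using Nat.twoStepInduction with
  | zero => exact base0
  | one => exact base1
  | more n ih1 ih2 => exact step n ih1 ih2

lemma qbeta : ∀ k,
    (denomRec c (k+1) : ℝ) * betaP α k + (denomRec c k : ℝ) * betaP α (k+1) = 1 := by
  intro k
  induction k with
  | zero =>
    have hinv := h.inv_eq 0
    have ht0 : tIt α 0 = α := by simp [tIt]
    have hα : 0 < α := by rw [← ht0]; exact h.tpos 0
    rw [ht0] at hinv
    have key : α * ((c 1 : ℝ) + tIt α 1) = 1 := by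
      rw [← hinv, mul_inv_cancel₀ hα.ne']
    simp only [denomRec, betaP_succ', betaP_zero', Nat.cast_one]
    nlinarith [key]
  | succ n ih =>
    have hb := h.beta_rec n
    have hq : (denomRec c (n+2) : ℝ) = (c (n+2) : ℝ) * (denomRec c (n+1) : ℝ) + (denomRec c n : ℝ) := by
      push_cast [denomRec]; ring
    rw [hq]
    have hbeta : (c (n+2) : ℝ) * betaP α (n+1) + betaP α (n+2) = betaP α n := by
      rw [hb]; ring
    nlinarith [ih, hbeta]

lemma det : ∀ k, (denomRec c k : ℤ) * (numerRec c (k+1) : ℤ)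
    - (numerRec c k : ℤ) * (denomRec c (k+1) : ℤ) = (-1)^k := by
  intro k
  induction k with
  | zero => simp [denomRec, numerRec]
  | succ n ih =>
    have hq : (denomRec c (n+2) : ℤ) = (c (n+2) : ℤ) * (denomRec c (n+1) : ℤ) + (denomRec c n : ℤ) := by
      push_cast [denomRec]; ring
    have hp : (numerRec c (n+2) : ℤ) = (c (n+2) : ℤ) * (numerRec c (n+1) : ℤ) + (numerRec c n : ℤ) := by
      push_cast [numerRec]; ring
    rw [hq, hp]
    have : (denomRec c (n+1) : ℤ) * ((c (n+2) : ℤ) * (numerRec c (n+1) : ℤ) + (numerRec c n : ℤ))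
        - (numerRec c (n+1) : ℤ) * ((c (n+2) : ℤ) * (denomRec c (n+1) : ℤ) + (denomRec c n : ℤ))
        = -((denomRec c n : ℤ) * (numerRec c (n+1) : ℤ) - (numerRec c n : ℤ) * (denomRec c (n+1) : ℤ)) := by ring
    rw [this, ih]; ring

lemma q_one_le : ∀ k, 1 ≤ denomRec c k := by
  intro k
  induction k using Nat.twoStepInduction with
  | zero => simp [denomRec]
  | one => simpa [denomRec] using h.cpos 0
  | more n ih1 ih2 =>
    show 1 ≤ c (n+2) * denomRec c (n+1) + denomRec c n
    have := h.cpos (n+1)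
    nlinarith

lemma q_mono_succ : ∀ k, denomRec c k ≤ denomRec c (k+1) := by
  intro k
  cases k with
  | zero => simpa [denomRec] using h.cpos 0
  | succ n =>
    show denomRec c (n+1) ≤ c (n+2) * denomRec c (n+1) + denomRec c n
    have := h.cpos (n+1)
    nlinarith [h.q_one_le n, h.q_one_le (n+1)]

lemma q_mono : ∀ {j k}, j ≤ k → denomRec c j ≤ denomRec c k := by
  intro j k hjk
  induction k, hjk using Nat.le_induction with
  | base => exact le_rfl
  | succ n hn ih => exact ih.trans (h.q_mono_succ n)

lemma cQ_le_Q (k : ℕ) : c (k+1) * denomRec c k ≤ denomRec c (k+1) := by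
  cases k with
  | zero => simp [denomRec]
  | succ n => show c (n+2) * denomRec c (n+1) ≤ c (n+2) * denomRec c (n+1) + denomRec c n; omega

lemma beta_lt_inv_q (k : ℕ) : (denomRec c (k+1) : ℝ) * betaP α k < 1 := by
  have := h.qbeta k
  nlinarith [h.beta_pos (k+1), (by exact_mod_cast h.q_one_le k : (1:ℝ) ≤ (denomRec c k : ℝ))]

lemma best_approx (K : ℕ) (i : ℕ) (hi0 : 0 < i) (hiQ : i < denomRec c (K+1)) (m : ℤ) :
    betaP α K ≤ |(i : ℝ) * α - (m : ℝ)| := by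
  set q1 : ℤ := (denomRec c K : ℤ) with hq1
  set q2 : ℤ := (denomRec c (K+1) : ℤ) with hq2
  set p1 : ℤ := (numerRec c K : ℤ) with hp1
  set p2 : ℤ := (numerRec c (K+1) : ℤ) with hp2
  have hdet : q1 * p2 - p1 * q2 = (-1)^K := h.det K
  set u : ℤ := (-1)^K * ((i : ℤ) * p2 - m * q2) with hu
  set v : ℤ := (-1)^K * (m * q1 - (i:ℤ) * p1) with hv
  have hsq : ((-1:ℤ)^K) * ((-1:ℤ)^K) = 1 := by
    rw [← mul_pow]; norm_num
  have hiu : u * q1 + v * q2 = (i : ℤ) := by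
    have h1 : u * q1 + v * q2 = (-1)^K * ((i:ℤ) * (q1 * p2 - p1 * q2)) := by ring
    rw [h1, hdet, show ((-1:ℤ))^K * ((i:ℤ) * (-1)^K) = (i:ℤ) * ((-1:ℤ)^K * (-1)^K) from by ring,
      hsq, mul_one]
  have hmu : u * p1 + v * p2 = m := by
    have h1 : u * p1 + v * p2 = (-1)^K * (m * (q1 * p2 - p1 * q2)) := by ring
    rw [h1, hdet, show ((-1:ℤ))^K * (m * (-1)^K) = m * ((-1:ℤ)^K * (-1)^K) from by ring,
      hsq, mul_one]
  clear_value q1 q2 p1 p2 u v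
  -- real identity
  have hr1 : (q1 : ℝ) * α - (p1 : ℝ) = (-1:ℝ)^K * betaP α K := by
    rw [hq1, hp1]; push_cast; exact h.qp_alpha K
  have hr2 : (q2 : ℝ) * α - (p2 : ℝ) = (-1:ℝ)^(K+1) * betaP α (K+1) := by
    rw [hq2, hp2]; push_cast; exact h.qp_alpha (K+1)
  have hiR : ((i:ℝ)) = (u:ℝ) * (q1:ℝ) + (v:ℝ) * (q2:ℝ) := by exact_mod_cast (hiu.symm)
  have hmR : ((m:ℝ)) = (u:ℝ) * (p1:ℝ) + (v:ℝ) * (p2:ℝ) := by exact_mod_cast (hmu.symm)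
  have hkey : (i:ℝ) * α - (m:ℝ)
      = (-1:ℝ)^K * ((u:ℝ) * betaP α K - (v:ℝ) * betaP α (K+1)) := by
    rw [hiR, hmR]
    have : ((u:ℝ) * (q1:ℝ) + (v:ℝ) * (q2:ℝ)) * α - ((u:ℝ) * (p1:ℝ) + (v:ℝ) * (p2:ℝ))
        = (u:ℝ) * ((q1:ℝ) * α - (p1:ℝ)) + (v:ℝ) * ((q2:ℝ) * α - (p2:ℝ)) := by ring
    rw [this, hr1, hr2]; ring
  have habs : |(i:ℝ) * α - (m:ℝ)| = |(u:ℝ) * betaP α K - (v:ℝ) * betaP α (K+1)| := by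
    rw [hkey, abs_mul, abs_pow, abs_neg, abs_one, one_pow, one_mul]
  rw [habs]
  have hbK := h.beta_pos K
  have hbK1 := h.beta_pos (K+1)
  have hq1pos : (1:ℤ) ≤ q1 := by rw [hq1]; exact_mod_cast h.q_one_le K
  have hq2i : (i:ℤ) < q2 := by rw [hq2]; exact_mod_cast hiQ
  have hipos : (0:ℤ) < (i:ℤ) := by exact_mod_cast hi0
  have hq2pos : (0:ℤ) < q2 := by linarith
  rcases lt_trichotomy v 0 with hvn | hvz | hvp
  · -- v ≤ -1 ⇒ u ≥ 1
    have hv1 : v ≤ -1 := by linarith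
    have h2 : q2 ≤ (-v) * q2 := le_mul_of_one_le_left hq2pos.le (by linarith)
    have h3 : (1:ℤ) ≤ u * q1 := by nlinarith [hiu]
    have hu1 : (1:ℤ) ≤ u := by
      by_contra hcon
      push_neg at hcon
      have h0 : u ≤ 0 := by omega
      have := mul_le_mul_of_nonneg_right h0 (by linarith : (0:ℤ) ≤ q1)
      simp at this
      linarith
    have huR : (1:ℝ) ≤ (u:ℝ) := by exact_mod_cast hu1
    have hvR : (v:ℝ) ≤ -1 := by exact_mod_cast hv1
    have hle : betaP α K ≤ (u:ℝ) * betaP α K - (v:ℝ) * betaP α (K+1) := by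
      nlinarith [mul_le_mul_of_nonneg_right huR hbK.le,
        mul_le_mul_of_nonneg_right hvR hbK1.le]
    exact hle.trans (le_abs_self _)
  · -- v = 0, u ≠ 0
    have hune : u ≠ 0 := by
      intro h0
      rw [h0, hvz] at hiu
      simp at hiu
      omega
    have h1u : (1:ℤ) ≤ |u| := Int.one_le_abs hune
    have h1uR : (1:ℝ) ≤ |(u:ℝ)| := by rw [← Int.cast_abs]; exact_mod_cast h1u
    rw [hvz]
    simp only [Int.cast_zero, zero_mul, sub_zero]
    rw [abs_mul, abs_of_pos hbK]
    nlinarith [mul_le_mul_of_nonneg_right h1uR hbK.le]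
  · -- v ≥ 1 ⇒ u ≤ -1
    have hv1 : 1 ≤ v := hvp
    have h2 : q2 ≤ v * q2 := le_mul_of_one_le_left hq2pos.le hv1
    have h3 : u * q1 ≤ -1 := by nlinarith [hiu]
    have hu1 : u ≤ -1 := by
      by_contra hcon
      push_neg at hcon
      have h0 : (0:ℤ) ≤ u := by omega
      have := mul_nonneg h0 (by linarith : (0:ℤ) ≤ q1)
      linarith
    have huR : (u:ℝ) ≤ -1 := by exact_mod_cast hu1
    have hvR : (1:ℝ) ≤ (v:ℝ) := by exact_mod_cast hv1
    have hle : (u:ℝ) * betaP α K - (v:ℝ) * betaP α (K+1) ≤ -(betaP α K) := by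
      nlinarith [mul_le_mul_of_nonneg_right huR hbK.le,
        mul_le_mul_of_nonneg_right hvR hbK1.le]
    calc betaP α K = |-(betaP α K)| := by rw [abs_neg, abs_of_pos hbK]
      _ ≤ |(u:ℝ) * betaP α K - (v:ℝ) * betaP α (K+1)| :=
          abs_le_abs_of_nonpos (by linarith) hle

end CFHyp
lemma runs_lemma (s d : ℕ → ℤ) (hd : ∀ j, s (j+1) = s j + d j) (hdz : ∀ j, d j ≠ 0)
    (N : ℕ) (t : ℤ) :
    ((Finset.range N).filter (fun j => s j = t)).card ≤
      ((Finset.Ico 1 N).filter (fun j => d j ≠ d (j-1))).card + 1 := by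
  classical
  set C := (Finset.Ico 1 N).filter (fun j => d j ≠ d (j-1)) with hC
  set r : ℕ → ℕ := fun j => (C.filter (· ≤ j)).sup id with hr
  have hrle : ∀ j, r j ≤ j := by
    intro j
    apply Finset.sup_le
    intro b hb
    exact (Finset.mem_filter.1 hb).2
  have hrmem : ∀ j, r j ∈ insert 0 C := by
    intro j
    rcases (C.filter (· ≤ j)).eq_empty_or_nonempty with he | hne
    · rw [hr]; simp only; rw [he]; simp
    · obtain ⟨b, hb, heq⟩ := Finset.exists_mem_eq_sup _ hne id
      rw [hr]; simp only; rw [heq]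
      exact Finset.mem_insert_of_mem (Finset.mem_filter.1 hb).1
  -- key: two hits in the same run are impossible
  have key : ∀ j j', j < j' → j' < N → s j = t → s j' = t → r j = r j' → False := by
    intro j j' hjj' hj'N hsj hsj' hrr
    have hconst : ∀ m, j ≤ m → m ≤ j' → d m = d j := by
      intro m hjm
      induction m, hjm using Nat.le_induction with
      | base => intro _; rfl
      | succ m hm ih =>
        intro hm1
        have hdm : d m = d j := ih (by omega)
        by_cases hch : d (m+1) = d m
        · rw [hch, hdm]
        · exfalso
          have hmC : m + 1 ∈ C := by
            rw [hC]
            refine Finset.mem_filter.2 ⟨Finset.mem_Ico.2 ⟨by omega, by omega⟩, ?_⟩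
            simpa using hch
          have h1 : m + 1 ≤ r j' := by
            apply Finset.le_sup (f := id)
            exact Finset.mem_filter.2 ⟨hmC, by simpa using hm1⟩
          have h2 : r j ≤ j := hrle j
          omega
    have hsum : ∀ Δ, j + Δ ≤ j' → s (j + Δ) = s j + Δ * d j := by
      intro Δ
      induction Δ with
      | zero => intro _; simp
      | succ n ih =>
        intro hle
        have h1 : s (j + n + 1) = s (j + n) + d (j + n) := hd _
        have h2 : d (j + n) = d j := hconst _ (by omega) (by omega)
        have h3 : s (j + n) = s j + n * d j := ih (by omega)
        have : s (j + (n+1)) = s (j + n + 1) := by ring_nf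
        rw [this, h1, h2, h3]
        push_cast
        ring
    have hfin := hsum (j' - j) (by omega)
    rw [show j + (j' - j) = j' by omega, hsj, hsj'] at hfin
    have : ((j' - j : ℕ) : ℤ) * d j = 0 := by linarith
    rcases mul_eq_zero.1 this with hz | hz
    · have : j' - j = 0 := by exact_mod_cast hz
      omega
    · exact hdz j hz
  have hinj : Set.InjOn r ((Finset.range N).filter (fun j => s j = t)) := by
    intro j hj j' hj' heq
    simp only [Finset.coe_filter, Set.mem_setOf_eq, Finset.mem_range] at hj hj'
    rcases lt_trichotomy j j' with hlt | heqq | hgt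
    · exact absurd (key j j' hlt hj'.1 hj.2 hj'.2 heq) (by simp)
    · exact heqq
    · exact absurd (key j' j hgt hj.1 hj'.2 hj.2 heq.symm) (by simp)
  calc ((Finset.range N).filter (fun j => s j = t)).card
      ≤ (insert 0 C).card := Finset.card_le_card_of_injOn r (fun j hj => hrmem j) hinj
    _ ≤ C.card + 1 := Finset.card_insert_le _ _

lemma birkhoffF_cases (y : ℝ) : birkhoffF y = 1 ∨ birkhoffF y = -1 := by
  unfold birkhoffF; split <;> simp

lemma birkhoffF_add_nat (y : ℝ) (p : ℕ) : birkhoffF (y + p) = birkhoffF y := by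
  unfold birkhoffF; rw [Int.fract_add_natCast]

lemma flip_mem {y β : ℝ} (hβ0 : 0 < β) (hβh : β < 1/2)
    (hne : birkhoffF (y + β) ≠ birkhoffF y) :
    Int.fract y ∈ Set.Ioc (1/2 - β) (1/2) ∪ Set.Ico (1 - β) 1 := by
  set w := Int.fract y with hw
  have hw0 : 0 ≤ w := Int.fract_nonneg y
  have hw1 : w < 1 := Int.fract_lt_one y
  have hfy : birkhoffF y = if w ≤ 1/2 then 1 else -1 := rfl
  have harg : Int.fract (y + β) = Int.fract (w + β) := by
    apply Int.fract_eq_fract.2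
    exact ⟨⌊y⌋, by rw [hw, Int.fract]; ring⟩
  by_cases hcase : w < 1 - β
  · left
    have hself : Int.fract (w + β) = w + β := Int.fract_eq_self.2 ⟨by linarith, by linarith⟩
    have hfyb : birkhoffF (y + β) = if w + β ≤ 1/2 then 1 else -1 := by
      unfold birkhoffF; rw [harg, hself]
    by_cases h1 : w ≤ 1/2
    · by_cases h2 : w + β ≤ 1/2
      · exact absurd (by rw [hfyb, hfy, if_pos h1, if_pos h2]) hne
      · exact ⟨by push_neg at h2; linarith, h1⟩
    · exfalso
      apply hne
      have h2 : ¬ (w + β ≤ 1/2) := by push_neg at h1 ⊢; linarith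
      rw [hfyb, hfy, if_neg h1, if_neg h2]
  · right
    exact ⟨by push_neg at hcase; linarith, hw1⟩

lemma window_count (α x : ℝ) (q Qb : ℕ) (p : ℕ) (β : ℝ) (t : ℤ)
    (hq : Odd q) (hβ0 : 0 < β) (hβh : β < 1/2)
    (hqα : (q:ℝ) * α = (p:ℝ) + β)
    (hsep : ∀ m, m ∈ Finset.Icc 1 Qb → ∀ m', m' ∈ Finset.Icc 1 Qb → m ≠ m' →
       β ≤ |Int.fract (x + (m:ℝ)*α) - Int.fract (x + (m':ℝ)*α)|) :
    ((Finset.Icc 1 Qb).filter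
      (fun i : ℕ => (∑ r ∈ Finset.Ioc 0 i, birkhoffF (x + (r:ℝ)*α)) = t)).card ≤ 3 * q := by
  classical
  have hq0 : 0 < q := hq.pos
  set u : ℕ → ℤ := fun r => birkhoffF (x + (r:ℝ)*α) with hu
  set S : ℕ → ℤ := fun i => ∑ r ∈ Finset.Ioc 0 i, u r with hS
  set E := (Finset.Icc 1 Qb).filter (fun m => u (m+q) ≠ u m) with hE
  have hushift : ∀ m : ℕ, u (m + q) = birkhoffF ((x + (m:ℝ)*α) + β) := by
    intro m
    rw [hu]
    simp only
    have harg : x + ((m+q : ℕ):ℝ)*α = ((x + (m:ℝ)*α) + β) + (p:ℝ) := by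
      push_cast
      linear_combination hqα
    rw [harg]
    exact birkhoffF_add_nat _ p
  have hEcard : E.card ≤ 2 := by
    have hEsub : E ⊆ ((Finset.Icc 1 Qb).filter
          (fun m => Int.fract (x + (m:ℝ)*α) ∈ Set.Ioc (1/2 - β) (1/2)))
        ∪ ((Finset.Icc 1 Qb).filter
          (fun m => Int.fract (x + (m:ℝ)*α) ∈ Set.Ico (1 - β) 1)) := by
      intro m hm
      obtain ⟨hmIcc, hmne⟩ := Finset.mem_filter.1 hm
      have hflip := flip_mem hβ0 hβh (y := x + (m:ℝ)*α) (by rw [← hushift m]; exact hmne)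
      rcases hflip with h | h
      · exact Finset.mem_union_left _ (Finset.mem_filter.2 ⟨hmIcc, h⟩)
      · exact Finset.mem_union_right _ (Finset.mem_filter.2 ⟨hmIcc, h⟩)
    have h1 : ((Finset.Icc 1 Qb).filter
        (fun m : ℕ => Int.fract (x + (m:ℝ)*α) ∈ Set.Ioc (1/2 - β) (1/2))).card ≤ 1 := by
      apply Finset.card_le_one.2
      intro m hm m' hm'
      by_contra hne
      obtain ⟨hmI, hPm⟩ := Finset.mem_filter.1 hm
      obtain ⟨hm'I, hPm'⟩ := Finset.mem_filter.1 hm'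
      simp only [Set.mem_Ioc] at hPm hPm'
      refine absurd (hsep m hmI m' hm'I hne) (not_le.2 ?_)
      rw [abs_lt]
      constructor <;> linarith
    have h2 : ((Finset.Icc 1 Qb).filter
        (fun m : ℕ => Int.fract (x + (m:ℝ)*α) ∈ Set.Ico (1 - β) 1)).card ≤ 1 := by
      apply Finset.card_le_one.2
      intro m hm m' hm'
      by_contra hne
      obtain ⟨hmI, hPm⟩ := Finset.mem_filter.1 hm
      obtain ⟨hm'I, hPm'⟩ := Finset.mem_filter.1 hm'
      simp only [Set.mem_Ico] at hPm hPm'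
      refine absurd (hsep m hmI m' hm'I hne) (not_le.2 ?_)
      rw [abs_lt]
      constructor <;> linarith
    calc E.card ≤ _ := Finset.card_le_card hEsub
      _ ≤ _ + _ := Finset.card_union_le _ _
      _ ≤ 2 := by omega
  set T : ℕ → ℤ := fun m => S (m+q) - S m with hT
  have hTIoc : ∀ m, T m = ∑ r ∈ Finset.Ioc m (m+q), u r := by
    intro m
    rw [hT]
    simp only [hS]
    rw [← Finset.sum_Ioc_consecutive u (Nat.zero_le m) (Nat.le_add_right m q)]
    ring
  have hTne : ∀ m, T m ≠ 0 := by
    intro m hzero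
    have hcast : ((T m : ℤ) : ZMod 2) = 0 := by rw [hzero]; simp
    rw [hTIoc m] at hcast
    push_cast at hcast
    have hone : ∀ r ∈ Finset.Ioc m (m+q), ((u r : ℤ) : ZMod 2) = 1 := by
      intro r _
      rcases birkhoffF_cases (x + (r:ℝ)*α) with h | h <;>
        · rw [hu]; simp only; rw [h]; decide
    rw [Finset.sum_congr rfl hone] at hcast
    simp only [Finset.sum_const, Nat.card_Ioc, Nat.add_sub_cancel_left, nsmul_eq_mul, mul_one]
      at hcast
    obtain ⟨j, hj⟩ := hq
    rw [hj, ← ZMod.natCast_mod (2*j+1) 2, Nat.mul_add_mod] at hcast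
    norm_num at hcast
  have hTstep : ∀ m, T (m+1) = T m + (u (m+1+q) - u (m+1)) := by
    intro m
    rw [hTIoc (m+1), hTIoc m]
    have e1 : ∑ r ∈ Finset.Ioc m (m+q+1), u r = (∑ r ∈ Finset.Ioc m (m+q), u r) + u (m+q+1) :=
      Finset.sum_Ioc_succ_top (by omega) u
    have e2 : (∑ r ∈ Finset.Ioc m (m+1), u r) + ∑ r ∈ Finset.Ioc (m+1) (m+q+1), u r
        = ∑ r ∈ Finset.Ioc m (m+q+1), u r :=
      Finset.sum_Ioc_consecutive u (by omega) (by omega)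
    have e3 : ∑ r ∈ Finset.Ioc m (m+1), u r = u (m+1) := by
      rw [Nat.Ioc_succ_singleton, Finset.sum_singleton]
    have hidx : m+1+q = m+q+1 := by omega
    rw [hidx]
    rw [e3] at e2
    linarith [e1, e2]
  have hTconst : ∀ m m', m ≤ m' → (∀ r, m < r → r ≤ m' → u (r+q) = u r) → T m' = T m := by
    intro m m' hmm' hall
    induction m', hmm' using Nat.le_induction with
    | base => rfl
    | succ n hn ih =>
      have h1 : T n = T m := ih (fun r hr1 hr2 => hall r hr1 (by omega))
      have h2 := hTstep n
      have h3 : u (n+1+q) = u (n+1) := hall (n+1) (by omega) (by omega)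
      rw [h2, h3, h1]
      ring
  -- fiberwise decomposition
  have hmap : ∀ i ∈ (Finset.Icc 1 Qb).filter (fun i => S i = t),
      (i-1) % q ∈ Finset.range q :=
    fun i _ => Finset.mem_range.2 (Nat.mod_lt _ hq0)
  rw [Finset.card_eq_sum_card_fiberwise hmap]
  have hbound : ∀ ρ ∈ Finset.range q,
      (((Finset.Icc 1 Qb).filter (fun i => S i = t)).filter
        (fun i => (i-1) % q = ρ)).card ≤ 3 := by
    intro ρ hρ
    by_cases hρQ : ρ + 1 ≤ Qb
    · set N := (Qb - (ρ+1))/q + 1 with hN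
      have hNiff : ∀ j, j < N ↔ ρ + 1 + j * q ≤ Qb := by
        intro j
        rw [hN, Nat.lt_succ_iff, Nat.le_div_iff_mul_le hq0]
        omega
      set sj : ℕ → ℤ := fun j => S (ρ + 1 + j * q) with hsj
      set dj : ℕ → ℤ := fun j => T (ρ + 1 + j * q) with hdj
      have hdd : ∀ j, sj (j+1) = sj j + dj j := by
        intro j
        rw [hsj, hdj]
        simp only [hT]
        have hidx : ρ + 1 + (j+1) * q = (ρ + 1 + j * q) + q := by ring
        rw [hidx]
        ring
      have hddz : ∀ j, dj j ≠ 0 := fun j => hTne _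
      have hchanges : ((Finset.Ico 1 N).filter (fun j => dj j ≠ dj (j-1))).card ≤ E.card := by
        have hchoice : ∀ j ∈ (Finset.Ico 1 N).filter (fun j => dj j ≠ dj (j-1)),
            ∃ m, ρ + 1 + (j-1) * q < m ∧ m ≤ ρ + 1 + j * q ∧ u (m + q) ≠ u m := by
          intro j hj
          obtain ⟨hjIco, hjne⟩ := Finset.mem_filter.1 hj
          obtain ⟨hj1, hjN⟩ := Finset.mem_Ico.1 hjIco
          by_contra hcon
          push_neg at hcon
          apply hjne
          have hle : ρ + 1 + (j-1)*q ≤ ρ + 1 + j*q := by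
            have : (j-1)*q ≤ j*q := Nat.mul_le_mul_right q (by omega)
            omega
          have heq := hTconst (ρ + 1 + (j-1)*q) (ρ + 1 + j*q) hle
            (fun r h1 h2 => hcon r h1 h2)
          rw [hdj]
          simp only
          rw [heq]
        choose! mfun hspec1 hspec2 hspec3 using hchoice
        apply Finset.card_le_card_of_injOn mfun
        · intro j hj
          obtain ⟨hjIco, _⟩ := Finset.mem_filter.1 hj
          obtain ⟨hj1, hjN⟩ := Finset.mem_Ico.1 hjIco
          have h1 := hspec1 j hj
          have h2 := hspec2 j hj
          have h3 := hspec3 j hj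
          have hjQb : ρ + 1 + j * q ≤ Qb := (hNiff j).1 hjN
          rw [hE]
          exact Finset.mem_filter.2 ⟨Finset.mem_Icc.2 ⟨by omega, by omega⟩, h3⟩
        · intro j hj j' hj' heq
          simp only [Finset.coe_filter, Set.mem_setOf_eq, Finset.mem_Ico] at hj hj'
          by_contra hne
          rcases Ne.lt_or_gt hne with hlt | hlt
          · have k1 := hspec2 j (Finset.mem_filter.2 ⟨Finset.mem_Ico.2 hj.1, hj.2⟩)
            have k2 := hspec1 j' (Finset.mem_filter.2 ⟨Finset.mem_Ico.2 hj'.1, hj'.2⟩)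
            have : j * q ≤ (j'-1) * q := Nat.mul_le_mul_right q (by omega)
            omega
          · have k1 := hspec2 j' (Finset.mem_filter.2 ⟨Finset.mem_Ico.2 hj'.1, hj'.2⟩)
            have k2 := hspec1 j (Finset.mem_filter.2 ⟨Finset.mem_Ico.2 hj.1, hj.2⟩)
            have : j' * q ≤ (j-1) * q := Nat.mul_le_mul_right q (by omega)
            omega
      have hhits := runs_lemma sj dj hdd hddz N t
      have hfibhits : (((Finset.Icc 1 Qb).filter (fun i => S i = t)).filter
            (fun i => (i-1) % q = ρ)).card
          ≤ ((Finset.range N).filter (fun j => sj j = t)).card := by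
        apply Finset.card_le_card_of_injOn (fun i => (i-1)/q)
        · intro i hi
          obtain ⟨hi1, hmod⟩ := Finset.mem_filter.1 hi
          obtain ⟨hiIcc, hSi⟩ := Finset.mem_filter.1 hi1
          obtain ⟨h1i, hiQb⟩ := Finset.mem_Icc.1 hiIcc
          have d1 : (i-1)/q * q + (i-1) % q = i - 1 := Nat.div_add_mod' (i-1) q
          have hieq : i = ρ + 1 + ((i-1)/q) * q := by omega
          refine Finset.mem_filter.2 ⟨Finset.mem_range.2 ((hNiff ((i-1)/q)).2 (by omega)), ?_⟩
          rw [hsj]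
          simp only
          rw [← hieq]
          exact hSi
        · intro i hi i' hi' heq
          simp only [Finset.coe_filter, Set.mem_setOf_eq] at hi hi'
          obtain ⟨hi1, hmod⟩ := hi
          obtain ⟨hi1', hmod'⟩ := hi'
          obtain ⟨hiIcc, _⟩ := Finset.mem_filter.1 hi1
          obtain ⟨hiIcc', _⟩ := Finset.mem_filter.1 hi1'
          obtain ⟨h1i, hiQb⟩ := Finset.mem_Icc.1 hiIcc
          obtain ⟨h1i', hiQb'⟩ := Finset.mem_Icc.1 hiIcc'
          have d1 : (i-1)/q * q + (i-1) % q = i - 1 := Nat.div_add_mod' (i-1) q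
          have d2 : (i'-1)/q * q + (i'-1) % q = i' - 1 := Nat.div_add_mod' (i'-1) q
          simp only at heq
          rw [heq] at d1
          omega
      omega
    · rw [Finset.card_eq_zero.2]
      · omega
      · apply Finset.eq_empty_of_forall_notMem
        intro i hi
        obtain ⟨hi1, hmod⟩ := Finset.mem_filter.1 hi
        obtain ⟨hiIcc, _⟩ := Finset.mem_filter.1 hi1
        obtain ⟨h1i, hiQb⟩ := Finset.mem_Icc.1 hiIcc
        have := Nat.mod_le (i-1) q
        omega
  calc ∑ ρ ∈ Finset.range q, (((Finset.Icc 1 Qb).filter (fun i => S i = t)).filter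
        (fun i => (i-1) % q = ρ)).card
      ≤ ∑ ρ ∈ Finset.range q, 3 := Finset.sum_le_sum hbound
    _ = 3 * q := by simp [Finset.sum_const, mul_comm]

lemma inter_odd (a b : ℕ → ℕ) (k : ℕ) : interleave a b (2*k+1) = 2 * a (k+1) := by
  unfold interleave
  rw [if_pos (by omega : (2*k+1) % 2 = 1), show (2*k+1+1)/2 = k+1 by omega]

lemma inter_even (a b : ℕ → ℕ) (k : ℕ) : interleave a b (2*k+2) = b (k+1) := by
  unfold interleave
  rw [if_neg (by omega : ¬ (2*k+2) % 2 = 1), show (2*k+2)/2 = k+1 by omega]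

lemma denom_rec_eq (c : ℕ → ℕ) (k : ℕ) :
    denomRec c (k+2) = c (k+2) * denomRec c (k+1) + denomRec c k := rfl

lemma parity (a b : ℕ → ℕ) : ∀ k, Odd (denomRec (interleave a b) (2*k)) ∧
    Even (denomRec (interleave a b) (2*k+1)) := by
  intro k
  induction k with
  | zero =>
    constructor
    · show Odd (denomRec (interleave a b) 0)
      simp [denomRec]
    · show Even (denomRec (interleave a b) 1)
      have : denomRec (interleave a b) 1 = interleave a b 1 := rfl
      rw [this, show (1:ℕ) = 2*0+1 from rfl, inter_odd]
      exact even_two_mul _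
  | succ n ih =>
    obtain ⟨h1, h2⟩ := ih
    have e1 : 2*(n+1) = (2*n) + 2 := by ring
    have e2 : 2*(n+1)+1 = (2*n+1) + 2 := by ring
    constructor
    · rw [e1, denom_rec_eq]
      exact ((h2.mul_left _).add_odd h1)
    · rw [e2, denom_rec_eq]
      refine Even.add ?_ h2
      have e3 : 2*n+1+2 = 2*(n+1)+1 := by ring
      rw [e3, inter_odd]
      exact (even_two_mul _).mul_right _

lemma birkhoffS_Ioc (α : ℝ) : ∀ i : ℕ,
    birkhoffS α α i = ∑ r ∈ Finset.Ioc 0 i, birkhoffF ((0:ℝ) + (r:ℝ)*α) := by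
  intro i
  induction i with
  | zero => simp [birkhoffS]
  | succ n ih =>
    rw [birkhoffS, Finset.sum_range_succ, ← birkhoffS, ih,
      Finset.sum_Ioc_succ_top (Nat.zero_le n)]
    congr 1
    congr 1
    push_cast
    ring

lemma shift_sum (α : ℝ) (s : ℕ) : ∀ L : ℕ,
    ∑ r ∈ Finset.Ioc s (s + L), birkhoffF ((0:ℝ) + (r:ℝ)*α)
      = ∑ r ∈ Finset.Ioc 0 L, birkhoffF (((s:ℕ):ℝ)*α + (r:ℝ)*α) := by
  intro L
  induction L with
  | zero => simp
  | succ n ih =>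
    rw [show s + (n+1) = (s+n)+1 from rfl, Finset.sum_Ioc_succ_top (by omega),
      Finset.sum_Ioc_succ_top (Nat.zero_le n), ih]
    congr 1
    congr 1
    push_cast
    ring


end Stmt12Aux

set_option maxHeartbeats 1000000 in
/-- For α = [2a_1, b_1, 2a_2, b_2, …] with a_n > ε·A_{n−1} for all n ≥ 2,
    there is C < ∞ such that for every n ≥ 1 and every level t, the number of times
    1 ≤ i ≤ q_{2n} with S_i(α,α) = t is at most C·q_{2n}/A_n. -/
theorem stmt12 (a b : ℕ → ℕ) (ha : ∀ i, 1 ≤ i → 0 < a i) (hb : ∀ i, 1 ≤ i → 0 < b i)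
    (α : ℝ) (hα : α ∈ Set.Ioo (0 : ℝ) 1) (hirr : Irrational α)
    (hcf : ∀ j, 1 ≤ j → cfA α j = interleave a b j)
    (ε : ℝ) (hε : 0 < ε)
    (hgrow : ∀ n, 2 ≤ n → ε * ((∑ i ∈ Finset.Icc 1 (n - 1), a i : ℕ) : ℝ) < (a n : ℝ)) :
    ∃ C : ℝ, ∀ n, 1 ≤ n → ∀ t : ℤ,
      (((Finset.Icc 1 (denomRec (interleave a b) (2 * n))).filter
          (fun i => birkhoffS α α i = t)).card : ℝ)
        ≤ C * (denomRec (interleave a b) (2 * n) : ℝ) /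
            ((∑ i ∈ Finset.Icc 1 n, a i : ℕ) : ℝ) := by
  classical
  open Stmt12Aux in
  set c := interleave a b with hc
  have hcfh : Stmt12Aux.CFHyp α c := by
    refine ⟨fun k => ((Stmt12Aux.tIt_irr_mem hirr hα k).2).1,
            fun k => ((Stmt12Aux.tIt_irr_mem hirr hα k).2).2, ?_, ?_⟩
    · intro k
      have h0 := Stmt12Aux.tIt_inv_eq hirr hα k
      rwa [hcf (k+1) (by omega)] at h0
    · intro k
      have h0 := Stmt12Aux.one_le_cfA_succ hirr hα k
      rwa [hcf (k+1) (by omega)] at h0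
  refine ⟨3*(1+1/ε), ?_⟩
  intro n hn t
  obtain ⟨m, rfl⟩ : ∃ m, n = m + 1 := ⟨n - 1, by omega⟩
  have h2n : 2*(m+1) = 2*m+2 := by ring
  rw [h2n]
  set q : ℕ := denomRec c (2*m) with hqdef
  set Qb : ℕ := denomRec c (2*m+1) with hQbdef
  set Nq : ℕ := denomRec c (2*m+2) with hNqdef
  clear_value q Qb Nq
  have hq0 : 0 < q := by rw [hqdef]; exact hcfh.q_one_le _
  have hQb0 : 0 < Qb := by rw [hQbdef]; exact hcfh.q_one_le _
  have hqQb : q ≤ Qb := by rw [hqdef, hQbdef]; exact hcfh.q_mono_succ (2*m)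
  have hodd : Odd q := by rw [hqdef, hc]; exact (Stmt12Aux.parity a b m).1
  have hβpos := hcfh.beta_pos (2*m)
  have hden1 : denomRec c 1 = 2 * a 1 := by
    have h0 : denomRec c 1 = c 1 := rfl
    rw [h0, hc, show (1:ℕ) = 2*0+1 from rfl, Stmt12Aux.inter_odd]
  have h2Qb : 2 ≤ Qb := by
    have h1 : denomRec c 1 ≤ Qb := by rw [hQbdef]; exact hcfh.q_mono (by omega)
    have ha1 := ha 1 le_rfl
    omega
  have hβhalf : Stmt12Aux.betaP α (2*m) < 1/2 := by
    have hlt := hcfh.beta_lt_inv_q (2*m)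
    rw [← hQbdef] at hlt
    have h2R : (2:ℝ) ≤ (Qb:ℝ) := by exact_mod_cast h2Qb
    nlinarith
  have hqα : (q:ℝ)*α = (Stmt12Aux.numerRec c (2*m) : ℝ) + Stmt12Aux.betaP α (2*m) := by
    have hqp := hcfh.qp_alpha (2*m)
    rw [← hqdef] at hqp
    have hpow : (-1:ℝ)^(2*m) = 1 := by
      rw [pow_mul]; norm_num
    rw [hpow, one_mul] at hqp
    linarith
  have hsep : ∀ x : ℝ, ∀ mm ∈ Finset.Icc 1 Qb, ∀ mm' ∈ Finset.Icc 1 Qb, mm ≠ mm' →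
      Stmt12Aux.betaP α (2*m) ≤
        |Int.fract (x + (mm:ℝ)*α) - Int.fract (x + (mm':ℝ)*α)| := by
    intro x mm hmm mm' hmm' hne
    have key : ∀ u v : ℕ, v < u → u ≤ Qb → 1 ≤ v →
        Stmt12Aux.betaP α (2*m) ≤ |Int.fract (x + (u:ℝ)*α) - Int.fract (x + (v:ℝ)*α)| := by
      intro u v hlt hle hv1
      have hfr : Int.fract (x + (u:ℝ)*α) - Int.fract (x + (v:ℝ)*α)
          = ((u - v : ℕ) : ℝ) * α
            - ((⌊x + (u:ℝ)*α⌋ - ⌊x + (v:ℝ)*α⌋ : ℤ) : ℝ) := by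
        rw [Int.fract, Int.fract]
        push_cast [Nat.cast_sub hlt.le]
        ring
      rw [hfr]
      exact hcfh.best_approx (2*m) (u - v) (by omega) (by rw [← hQbdef]; omega) _
    rcases Ne.lt_or_gt hne with h | h
    · rw [abs_sub_comm]
      exact key mm' mm h (Finset.mem_Icc.1 hmm').2 (Finset.mem_Icc.1 hmm).1
    · exact key mm mm' h (Finset.mem_Icc.1 hmm).2 (Finset.mem_Icc.1 hmm').1
  set S0 : ℕ → ℤ := fun i => ∑ r ∈ Finset.Ioc 0 i, birkhoffF ((0:ℝ) + (r:ℝ)*α) with hS0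
  have hbig : ((Finset.Icc 1 Nq).filter (fun i => birkhoffS α α i = t))
      = ((Finset.Icc 1 Nq).filter (fun i => S0 i = t)) := by
    apply Finset.filter_congr
    intro i _
    rw [Stmt12Aux.birkhoffS_Ioc α i]
  rw [hbig]
  have hNrec : Nq = b (m+1) * Qb + q := by
    rw [hNqdef, hQbdef, hqdef, Stmt12Aux.denom_rec_eq, hc, Stmt12Aux.inter_even]
  have hkey : ((Finset.Icc 1 Nq).filter (fun i => S0 i = t)).card
      ≤ (b (m+1) + 1) * (3 * q) := by
    have hmap : ∀ i ∈ (Finset.Icc 1 Nq).filter (fun i => S0 i = t),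
        (i-1)/Qb ∈ Finset.range (b (m+1) + 1) := by
      intro i hi
      obtain ⟨hiIcc, _⟩ := Finset.mem_filter.1 hi
      obtain ⟨h1i, hiN⟩ := Finset.mem_Icc.1 hiIcc
      refine Finset.mem_range.2 ?_
      have hexp : (b (m+1) + 1) * Qb = b (m+1) * Qb + Qb := by ring
      refine (Nat.div_lt_iff_lt_mul hQb0).2 ?_
      generalize hW1 : (b (m+1) + 1) * Qb = W1 at hexp ⊢
      generalize hW2 : b (m+1) * Qb = W2 at hexp hNrec
      omega
    rw [Finset.card_eq_sum_card_fiberwise hmap]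
    have hwin : ∀ w ∈ Finset.range (b (m+1) + 1),
        (((Finset.Icc 1 Nq).filter (fun i => S0 i = t)).filter
          (fun i => (i-1)/Qb = w)).card ≤ 3 * q := by
      intro w _
      have hsubcount := Stmt12Aux.window_count α (((w*Qb : ℕ):ℝ)*α) q Qb
          (Stmt12Aux.numerRec c (2*m)) (Stmt12Aux.betaP α (2*m)) (t - S0 (w*Qb))
          hodd hβpos hβhalf hqα (hsep _)
      refine le_trans (Finset.card_le_card_of_injOn (fun i => i - w*Qb) ?_ ?_) hsubcount
      · intro i hi
        dsimp only
        obtain ⟨hi1, hdiv⟩ := Finset.mem_filter.1 hi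
        obtain ⟨hiIcc, hSi⟩ := Finset.mem_filter.1 hi1
        obtain ⟨h1i, hiN⟩ := Finset.mem_Icc.1 hiIcc
        have d1 : (i-1)/Qb * Qb + (i-1) % Qb = i - 1 := Nat.div_add_mod' (i-1) Qb
        have dmod : (i-1) % Qb < Qb := Nat.mod_lt _ hQb0
        rw [hdiv] at d1
        generalize hWW : w * Qb = WW at d1 ⊢
        refine Finset.mem_filter.2 ⟨Finset.mem_Icc.2 ⟨by omega, by omega⟩, ?_⟩
        have e1 : S0 i = (∑ r ∈ Finset.Ioc 0 WW, birkhoffF ((0:ℝ) + (r:ℝ)*α))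
              + ∑ r ∈ Finset.Ioc WW i, birkhoffF ((0:ℝ) + (r:ℝ)*α) := by
          rw [hS0]
          exact (Finset.sum_Ioc_consecutive _ (Nat.zero_le _) (by omega)).symm
        have e2 : ∑ r ∈ Finset.Ioc WW i, birkhoffF ((0:ℝ) + (r:ℝ)*α)
            = ∑ r ∈ Finset.Ioc 0 (i - WW), birkhoffF ((((WW:ℕ)):ℝ)*α + (r:ℝ)*α) := by
          rw [← Stmt12Aux.shift_sum α WW (i - WW),
            show WW + (i - WW) = i by omega]
        have e3 : S0 WW = ∑ r ∈ Finset.Ioc 0 WW, birkhoffF ((0:ℝ) + (r:ℝ)*α) := by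
          rw [hS0]
        show (∑ r ∈ Finset.Ioc 0 (i - WW), birkhoffF ((((WW:ℕ)):ℝ)*α + (r:ℝ)*α))
            = t - S0 WW
        rw [← e2]
        omega
      · intro i hi i' hi' heq
        simp only [Finset.coe_filter, Set.mem_setOf_eq] at hi hi'
        obtain ⟨hi1, hdiv⟩ := hi
        obtain ⟨hi1', hdiv'⟩ := hi'
        obtain ⟨hiIcc, _⟩ := Finset.mem_filter.1 hi1
        obtain ⟨hiIcc', _⟩ := Finset.mem_filter.1 hi1'
        obtain ⟨h1i, hiN⟩ := Finset.mem_Icc.1 hiIcc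
        obtain ⟨h1i', hiN'⟩ := Finset.mem_Icc.1 hiIcc'
        have d1 : (i-1)/Qb * Qb + (i-1) % Qb = i - 1 := Nat.div_add_mod' (i-1) Qb
        have d1' : (i'-1)/Qb * Qb + (i'-1) % Qb = i' - 1 := Nat.div_add_mod' (i'-1) Qb
        have dmod : (i-1) % Qb < Qb := Nat.mod_lt _ hQb0
        have dmod' : (i'-1) % Qb < Qb := Nat.mod_lt _ hQb0
        rw [hdiv] at d1
        rw [hdiv'] at d1'
        have heq2 : i - w*Qb = i' - w*Qb := heq
        generalize hWW : w * Qb = WW at d1 d1' heq2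
        omega
    calc ∑ w ∈ Finset.range (b (m+1) + 1),
          (((Finset.Icc 1 Nq).filter (fun i => S0 i = t)).filter
            (fun i => (i-1)/Qb = w)).card
        ≤ ∑ _w ∈ Finset.range (b (m+1) + 1), 3*q := Finset.sum_le_sum hwin
      _ = (b (m+1) + 1) * (3*q) := by
          rw [Finset.sum_const, smul_eq_mul, Finset.card_range]
  -- arithmetic
  have hqc : 2 * a (m+1) * q ≤ Qb := by
    have h1 := hcfh.cQ_le_Q (2*m)
    rw [← hqdef, ← hQbdef] at h1
    rw [hc] at h1
    rw [Stmt12Aux.inter_odd a b m] at h1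
    exact h1
  have hbQ : b (m+1) * Qb ≤ Nq := by omega
  have hb1 := hb (m+1) (by omega)
  have hcard6 : ((Finset.Icc 1 Nq).filter (fun i => S0 i = t)).card
      ≤ 6 * (q * b (m+1)) := by
    calc ((Finset.Icc 1 Nq).filter (fun i => S0 i = t)).card
        ≤ (b (m+1) + 1) * (3 * q) := hkey
      _ ≤ 6 * (q * b (m+1)) := by nlinarith
  have hNqA : 2 * (a (m+1) * (q * b (m+1))) ≤ Nq := by
    calc 2 * (a (m+1) * (q * b (m+1))) = (2 * a (m+1) * q) * b (m+1) := by ring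
      _ ≤ Qb * b (m+1) := Nat.mul_le_mul_right _ hqc
      _ = b (m+1) * Qb := by ring
      _ ≤ Nq := hbQ
  have hApos : 0 < ∑ i ∈ Finset.Icc 1 (m+1), a i := by
    have h1 : 0 < a 1 := ha 1 le_rfl
    exact lt_of_lt_of_le h1 (Finset.single_le_sum (f := fun i => a i)
      (fun i _ => Nat.zero_le _) (Finset.mem_Icc.2 ⟨le_rfl, by omega⟩))
  have hAle : ((∑ i ∈ Finset.Icc 1 (m+1), a i : ℕ) : ℝ) ≤ (1 + 1/ε) * (a (m+1) : ℝ) := by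
    cases m with
    | zero =>
      rw [Finset.Icc_self, Finset.sum_singleton]
      have h0 : (0:ℝ) ≤ (a 1 : ℝ) := Nat.cast_nonneg _
      have hεinv : (0:ℝ) ≤ 1/ε := by positivity
      nlinarith
    | succ m' =>
      have hgr := hgrow (m'+2) (by omega)
      rw [show (m'+2) - 1 = m'+1 by omega] at hgr
      have hsum : ∑ i ∈ Finset.Icc 1 (m'+2), a i
          = (∑ i ∈ Finset.Icc 1 (m'+1), a i) + a (m'+2) :=
        Finset.sum_Icc_succ_top (by omega) _
      rw [hsum]
      push_cast
      have hS0' : (0:ℝ) ≤ ((∑ i ∈ Finset.Icc 1 (m'+1), a i : ℕ) : ℝ) := Nat.cast_nonneg _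
      have h1 : ((∑ i ∈ Finset.Icc 1 (m'+1), a i : ℕ) : ℝ) ≤ (a (m'+2):ℝ) / ε := by
        rw [le_div_iff₀ hε]
        nlinarith [hgr]
      have h2 : (a (m'+2):ℝ)/ε = (1/ε) * (a (m'+2):ℝ) := by ring
      push_cast at h1 ⊢
      nlinarith [h1]
  have hAposR : (0:ℝ) < ((∑ i ∈ Finset.Icc 1 (m+1), a i : ℕ) : ℝ) := by
    exact_mod_cast hApos
  rw [le_div_iff₀ hAposR]
  have c1 : ((((Finset.Icc 1 Nq).filter (fun i => S0 i = t)).card : ℕ) : ℝ)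
      ≤ 6 * ((q:ℝ) * (b (m+1):ℝ)) := by exact_mod_cast hcard6
  have c3 : 2 * ((a (m+1):ℝ) * ((q:ℝ)*(b (m+1):ℝ))) ≤ (Nq:ℝ) := by exact_mod_cast hNqA
  have step1 : ((((Finset.Icc 1 Nq).filter (fun i => S0 i = t)).card : ℕ) : ℝ)
        * ((∑ i ∈ Finset.Icc 1 (m+1), a i : ℕ) : ℝ)
      ≤ (6 * ((q:ℝ)*(b (m+1):ℝ))) * ((1 + 1/ε) * (a (m+1):ℝ)) :=
    mul_le_mul c1 hAle (Nat.cast_nonneg _) (by positivity)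
  have step2 : (6 * ((q:ℝ)*(b (m+1):ℝ))) * ((1 + 1/ε) * (a (m+1):ℝ))
      = 3*(1+1/ε) * (2 * ((a (m+1):ℝ) * ((q:ℝ)*(b (m+1):ℝ)))) := by ring
  have step3 : 3*(1+1/ε) * (2 * ((a (m+1):ℝ) * ((q:ℝ)*(b (m+1):ℝ))))
      ≤ 3*(1+1/ε) * (Nq:ℝ) :=
    mul_le_mul_of_nonneg_left c3 (by positivity)
  linarith
end
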